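/- arXiv:1708.00944 — 7 statements merged into one kernel-verified Lean document; each statement's English description precedes it below -/
import Mathlib

section
/- Let f ∈ 𝔽(X) be a non-constant rational function in lowest terms with iterates f^(k), and let e be the smallest positive integer k such that f^(k)(0) = 0 (assumed finite). Then for all k > ℓ ≥ 1, a zero of f^(ℓ) is a zero of f^(k) if and only if k ≡ ℓ (mod e). -/
open Polynomial
open scoped nonZeroDivisors
set_option maxHeartbeats 1600000
set_option linter.unusedVariables false
set_option linter.unusedTactic false
set_option linter.unusedSectionVars false

/-- Composition of rational functions: `rcomp u v = u ∘ v`. -/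
noncomputable def rcomp {F : Type*} [Field F] (u v : RatFunc F) : RatFunc F :=
  RatFunc.eval (algebraMap F (RatFunc F)) v u

/-- Iterates of a rational function: `riter f 0 = X`, `riter f (k+1) = f ∘ (riter f k)`. -/
noncomputable def riter {F : Type*} [Field F] (f : RatFunc F) : ℕ → RatFunc F
  | 0 => RatFunc.X
  | k + 1 => rcomp f (riter f k)

/-- Degree of a rational function (written in lowest terms as `num/denom`). -/
noncomputable def rdeg {F : Type*} [Field F] (f : RatFunc F) : ℕ :=
  max f.num.natDegree f.denom.natDegree

namespace Aux

variable {K : Type*} [Field K]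

/-- order of vanishing of `u` at `α` -/
noncomputable def rord (α : K) (u : RatFunc K) : ℤ :=
  (u.num.rootMultiplicity α : ℤ) - u.denom.rootMultiplicity α

theorem rcomp_eq (u v : RatFunc K) : rcomp u v = aeval v u.num / aeval v u.denom := by
  rw [rcomp, RatFunc.eval]; simp [Polynomial.aeval_def]

theorem rord_eq (α : K) {u : RatFunc K} {p q : K[X]} (hp : p ≠ 0) (hq : q ≠ 0)
    (h : u = algebraMap _ _ p / algebraMap _ _ q) :
    rord α u = (p.rootMultiplicity α : ℤ) - q.rootMultiplicity α := by
  have hu : u ≠ 0 := by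
    rw [h]
    exact div_ne_zero (RatFunc.algebraMap_ne_zero hp) (RatFunc.algebraMap_ne_zero hq)
  have key : u.num * q = p * u.denom := (RatFunc.num_mul_eq_mul_denom_iff hq).mpr h
  have h1 : rootMultiplicity α (u.num * q) = rootMultiplicity α (p * u.denom) := by rw [key]
  rw [rootMultiplicity_mul (mul_ne_zero (RatFunc.num_ne_zero hu) hq),
    rootMultiplicity_mul (mul_ne_zero hp u.denom_ne_zero)] at h1
  rw [rord]
  omega

theorem rord_mul (α : K) {u v : RatFunc K} (hu : u ≠ 0) (hv : v ≠ 0) :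
    rord α (u * v) = rord α u + rord α v := by
  have h : u * v = algebraMap _ _ (u.num * v.num) / algebraMap _ _ (u.denom * v.denom) := by
    conv_lhs => rw [← u.num_div_denom, ← v.num_div_denom]
    rw [map_mul, map_mul, div_mul_div_comm]
  rw [rord_eq α (mul_ne_zero (RatFunc.num_ne_zero hu) (RatFunc.num_ne_zero hv))
      (mul_ne_zero u.denom_ne_zero v.denom_ne_zero) h,
    rootMultiplicity_mul (mul_ne_zero (RatFunc.num_ne_zero hu) (RatFunc.num_ne_zero hv)),
    rootMultiplicity_mul (mul_ne_zero u.denom_ne_zero v.denom_ne_zero), rord, rord]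
  push_cast
  ring

theorem rord_one (α : K) : rord α (1 : RatFunc K) = 0 := by
  simp [rord, RatFunc.num_one, RatFunc.denom_one,
    rootMultiplicity_eq_zero (show ¬IsRoot 1 α by simp [IsRoot])]

theorem denom_eval_ne_zero {u : RatFunc K} {α : K} (h : u.num.eval α = 0) :
    u.denom.eval α ≠ 0 := by
  intro hd
  have h1 : (X - C α) ∣ u.num := dvd_iff_isRoot.mpr h
  have h2 : (X - C α) ∣ u.denom := dvd_iff_isRoot.mpr hd
  exact Polynomial.not_isUnit_X_sub_C α (u.isCoprime_num_denom.isUnit_of_dvd' h1 h2)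

theorem rord_pos_iff (α : K) {u : RatFunc K} (hu : u ≠ 0) :
    0 < rord α u ↔ u.num.eval α = 0 := by
  constructor
  · intro h
    have : 0 < u.num.rootMultiplicity α := by rw [rord] at h; omega
    exact ((rootMultiplicity_pos (RatFunc.num_ne_zero hu)).mp this)
  · intro h
    have h1 : 0 < u.num.rootMultiplicity α :=
      (rootMultiplicity_pos (RatFunc.num_ne_zero hu)).mpr h
    have h2 : u.denom.rootMultiplicity α = 0 :=
      rootMultiplicity_eq_zero (denom_eval_ne_zero h)
    rw [rord, h2]
    omega

theorem nonconst_of_root {s : RatFunc K} {α : K} (hs : s ≠ 0) (hsα : s.num.eval α = 0) :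
    ∀ c : K, s ≠ RatFunc.C c := by
  intro c hc
  subst hc
  rw [RatFunc.num_C] at hsα
  simp only [eval_C] at hsα
  subst hsα
  exact hs (map_zero RatFunc.C)

theorem sub_C_ne_zero {s : RatFunc K} (hnc : ∀ c : K, s ≠ RatFunc.C c) (β : K) :
    s - RatFunc.C β ≠ 0 := sub_ne_zero.mpr (hnc β)

theorem rord_C (α : K) {c : K} (hc : c ≠ 0) : rord α (RatFunc.C c : RatFunc K) = 0 := by
  simp [rord, RatFunc.num_C, RatFunc.denom_C,
    rootMultiplicity_eq_zero (show ¬IsRoot (C c) α by simp [IsRoot, hc]),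
    rootMultiplicity_eq_zero (show ¬IsRoot 1 α by simp [IsRoot])]

theorem rord_sub_C {s : RatFunc K} {α β : K} (hs : s ≠ 0) (hsα : s.num.eval α = 0)
    (hβ : β ≠ 0) : rord α (s - RatFunc.C β) = 0 := by
  have hd : s.denom.eval α ≠ 0 := denom_eval_ne_zero hsα
  have hrep : s - RatFunc.C β
      = algebraMap _ _ (s.num - C β * s.denom) / algebraMap _ _ s.denom := by
    rw [map_sub, map_mul, sub_div, RatFunc.num_div_denom]
    congr 1
    rw [mul_div_assoc, div_self (RatFunc.algebraMap_ne_zero s.denom_ne_zero), mul_one]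
    rfl
  have hpne : (s.num - C β * s.denom).eval α ≠ 0 := by
    simp [hsα]
    exact ⟨hβ, hd⟩
  have hp : s.num - C β * s.denom ≠ 0 := by
    intro h; rw [h] at hpne; simp at hpne
  rw [rord_eq α hp s.denom_ne_zero hrep,
    rootMultiplicity_eq_zero (show ¬IsRoot _ α from hpne),
    rootMultiplicity_eq_zero (show ¬IsRoot _ α from hd)]
  ring

section AlgClosed

variable [IsAlgClosed K]

theorem aeval_ne_zero_of_nonconst {v : RatFunc K} (hv : ∀ c : K, v ≠ RatFunc.C c)
    {p : K[X]} (hp : p ≠ 0) : aeval v p ≠ 0 := by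
  classical
  have hfac := (IsAlgClosed.splits (k := K) p).eq_prod_roots
  rw [hfac]
  rw [map_mul, map_multiset_prod, Multiset.map_map]
  apply mul_ne_zero
  · simp only [aeval_C]
    exact (_root_.map_ne_zero _).mpr (leadingCoeff_ne_zero.mpr hp)
  · apply Multiset.prod_ne_zero
    intro h0
    obtain ⟨a, _, hx⟩ := Multiset.mem_map.mp h0
    simp only [Function.comp_apply, map_sub, aeval_X, aeval_C,
      RatFunc.algebraMap_eq_C] at hx
    exact sub_C_ne_zero hv a hx

/-- Composition with a nonconstant rational function, as a ring hom. -/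
noncomputable def rE {v : RatFunc K} (hv : ∀ c : K, v ≠ RatFunc.C c) :
    RatFunc K →+* RatFunc K :=
  RatFunc.liftRingHom (aeval v).toRingHom
    (fun p hp => by
      simp only [Submonoid.mem_comap, mem_nonZeroDivisors_iff_ne_zero, AlgHom.toRingHom_eq_coe,
        RingHom.coe_coe] at *
      exact aeval_ne_zero_of_nonconst hv hp)

theorem rE_apply {v : RatFunc K} (hv : ∀ c : K, v ≠ RatFunc.C c) (u : RatFunc K) :
    rE hv u = rcomp u v := by
  rw [rE, RatFunc.liftRingHom_apply, rcomp_eq]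
  rfl

theorem rcomp_ne_zero {u v : RatFunc K} (hv : ∀ c : K, v ≠ RatFunc.C c) (hu : u ≠ 0) :
    rcomp u v ≠ 0 := by
  rw [← rE_apply hv]
  intro h
  exact hu ((rE hv).injective (by rw [h, map_zero]))

theorem rE_algebraMap {v : RatFunc K} (hv : ∀ c : K, v ≠ RatFunc.C c) (p : K[X]) :
    rE hv (algebraMap K[X] (RatFunc K) p) = aeval v p := by
  rw [rE_apply hv, rcomp_eq, RatFunc.num_algebraMap, RatFunc.denom_algebraMap]
  simp

theorem rE_comp_algebraMap {v : RatFunc K} (hv : ∀ c : K, v ≠ RatFunc.C c) :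
    (rE hv).comp (algebraMap K (RatFunc K)) = algebraMap K (RatFunc K) := by
  ext c
  have := rE_algebraMap hv (C c)
  simpa using this

theorem rcomp_nonconst {u v : RatFunc K} (hu : ∀ c : K, u ≠ RatFunc.C c)
    (hv : ∀ c : K, v ≠ RatFunc.C c) : ∀ c : K, rcomp u v ≠ RatFunc.C c := by
  intro c h
  apply hu c
  apply (rE hv).injective
  rw [rE_apply hv, h]
  have := rE_algebraMap hv (C c)
  simpa using this.symm

theorem rE_aeval {v w : RatFunc K} (hw : ∀ c : K, w ≠ RatFunc.C c) (p : K[X]) :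
    rE hw (aeval v p) = aeval (rE hw v) p := by
  rw [Polynomial.aeval_def, Polynomial.aeval_def, Polynomial.hom_eval₂,
    rE_comp_algebraMap hw]

theorem rcomp_assoc {u v w : RatFunc K} (hv : ∀ c : K, v ≠ RatFunc.C c)
    (hw : ∀ c : K, w ≠ RatFunc.C c) :
    rcomp (rcomp u v) w = rcomp u (rcomp v w) := by
  have hvw : ∀ c : K, rcomp v w ≠ RatFunc.C c := rcomp_nonconst hv hw
  have key : ((rE hw).comp (rE hv)) = rE hvw := by
    apply IsLocalization.ringHom_ext K[X]⁰
    refine RingHom.ext fun p => ?_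
    simp only [RingHom.coe_comp, Function.comp_apply]
    rw [rE_algebraMap hv, rE_aeval hw, rE_apply hw, rE_algebraMap hvw]
  calc rcomp (rcomp u v) w = rE hw (rE hv u) := by rw [rE_apply hw, rE_apply hv]
    _ = rE hvw u := by rw [← RingHom.comp_apply, key]
    _ = rcomp u (rcomp v w) := rE_apply hvw u

theorem rord_aeval {s : RatFunc K} {α : K} (hs : s ≠ 0) (hsα : s.num.eval α = 0)
    {p : K[X]} (hp : p ≠ 0) :
    rord α (aeval s p) = (p.rootMultiplicity 0 : ℤ) * rord α s := by
  classical
  have hnc : ∀ c : K, s ≠ RatFunc.C c := nonconst_of_root hs hsα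
  have hfac := (IsAlgClosed.splits (k := K) p).eq_prod_roots
  have main : ∀ m : Multiset K,
      (m.map (fun a => s - RatFunc.C a)).prod ≠ 0 ∧
      rord α (m.map (fun a => s - RatFunc.C a)).prod = (m.count 0 : ℤ) * rord α s := by
    intro m
    induction m using Multiset.induction_on with
    | empty => simp [rord_one]
    | cons a m ih =>
      obtain ⟨ih1, ih2⟩ := ih
      have hfa : s - RatFunc.C a ≠ 0 := sub_C_ne_zero hnc a
      constructor
      · rw [Multiset.map_cons, Multiset.prod_cons]
        exact mul_ne_zero hfa ih1
      · rw [Multiset.map_cons, Multiset.prod_cons, rord_mul α hfa ih1, ih2,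
          Multiset.count_cons]
        by_cases ha : a = 0
        · subst ha
          rw [map_zero, sub_zero]
          simp
          push_cast
          ring
        · rw [rord_sub_C hs hsα ha]
          have : ¬((0 : K) = a) := fun h => ha h.symm
          simp [this]
      
  obtain ⟨hprod, hord⟩ := main p.roots
  conv_lhs => rw [hfac]
  rw [map_mul, map_multiset_prod, Multiset.map_map]
  have heq : (p.roots.map (fun a => X - C a)).map (aeval s) =
      p.roots.map (fun a => s - RatFunc.C a) := by
    rw [Multiset.map_map]
    apply Multiset.map_congr rfl
    intro a _
    simp [RatFunc.algebraMap_eq_C]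
  rw [Multiset.map_map] at heq
  rw [heq]
  have hClc : aeval s (C p.leadingCoeff) ≠ 0 ∧
      rord α (aeval s (C p.leadingCoeff)) = 0 := by
    rw [aeval_C]
    constructor
    · exact (_root_.map_ne_zero _).mpr (leadingCoeff_ne_zero.mpr hp)
    · exact rord_C α (leadingCoeff_ne_zero.mpr hp)
  have hcnt : (Multiset.count 0 p.roots) = p.rootMultiplicity 0 := p.count_roots
  rw [rord_mul α hClc.1 hprod, hClc.2, hord, hcnt, zero_add]

theorem rord_rcomp {u s : RatFunc K} {α : K} (hu : u ≠ 0) (hs : s ≠ 0)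
    (hsα : s.num.eval α = 0) :
    rord α (rcomp u s) = rord 0 u * rord α s := by
  have hnc : ∀ c : K, s ≠ RatFunc.C c := nonconst_of_root hs hsα
  have hnum : aeval s u.num ≠ 0 :=
    aeval_ne_zero_of_nonconst hnc (RatFunc.num_ne_zero hu)
  have hden : aeval s u.denom ≠ 0 := aeval_ne_zero_of_nonconst hnc u.denom_ne_zero
  have hrc : rcomp u s ≠ 0 := rcomp_ne_zero hnc hu
  have hmul : rcomp u s * aeval s u.denom = aeval s u.num := by
    rw [rcomp_eq, div_mul_cancel₀ _ hden]
  have := rord_mul α hrc hden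
  rw [hmul, rord_aeval hs hsα (RatFunc.num_ne_zero hu),
    rord_aeval hs hsα u.denom_ne_zero] at this
  rw [show rord 0 u = (u.num.rootMultiplicity 0 : ℤ) - u.denom.rootMultiplicity 0 from rfl]
  linear_combination -this

theorem zero_comp {u s : RatFunc K} {α : K} (hu : u ≠ 0) (hs : s ≠ 0)
    (hsα : s.num.eval α = 0) :
    (rcomp u s).num.eval α = 0 ↔ u.num.eval 0 = 0 := by
  have hnc : ∀ c : K, s ≠ RatFunc.C c := nonconst_of_root hs hsα
  have hrc : rcomp u s ≠ 0 := rcomp_ne_zero hnc hu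
  have hd : 0 < rord α s := (rord_pos_iff α hs).mpr hsα
  rw [← rord_pos_iff α hrc, ← rord_pos_iff 0 hu, rord_rcomp hu hs hsα]
  constructor
  · intro h
    by_contra hneg
    push_neg at hneg
    nlinarith
  · intro h
    positivity

end AlgClosed

section AlgClosed2

variable {K : Type*} [Field K] [IsAlgClosed K]

theorem X_nonconst : ∀ c : K, (RatFunc.X : RatFunc K) ≠ RatFunc.C c := by
  intro c h
  have h2 := congrArg RatFunc.num h
  rw [RatFunc.num_X, RatFunc.num_C] at h2
  exact Polynomial.X_ne_C c h2

theorem riter_nonconst {f : RatFunc K} (hf : ∀ c : K, f ≠ RatFunc.C c) :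
    ∀ k, ∀ c : K, riter f k ≠ RatFunc.C c
  | 0 => X_nonconst
  | (k+1) => rcomp_nonconst hf (riter_nonconst hf k)

theorem riter_ne_zero {f : RatFunc K} (hf : ∀ c : K, f ≠ RatFunc.C c) (k : ℕ) :
    riter f k ≠ 0 := by
  have h := riter_nonconst hf k 0
  rw [map_zero] at h
  exact h

theorem rcomp_X (v : RatFunc K) : rcomp RatFunc.X v = v := by
  rw [rcomp]; exact RatFunc.eval_X _ _

theorem riter_add {f : RatFunc K} (hf : ∀ c : K, f ≠ RatFunc.C c) (a b : ℕ) :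
    riter f (a + b) = rcomp (riter f a) (riter f b) := by
  induction a with
  | zero => simp [riter, rcomp_X]
  | succ a ih =>
    have h1 : a + 1 + b = (a + b) + 1 := by omega
    rw [h1, riter, ih, ← rcomp_assoc (riter_nonconst hf a) (riter_nonconst hf b)]
    rfl

theorem orbit_iff {f : RatFunc K} (hf : ∀ c : K, f ≠ RatFunc.C c)
    {e : ℕ} (he0 : 0 < e) (he : (riter f e).num.eval 0 = 0)
    (hemin : ∀ k, 0 < k → k < e → (riter f k).num.eval 0 ≠ 0) :
    ∀ m, ((riter f m).num.eval 0 = 0 ↔ e ∣ m) := by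
  intro m
  induction m using Nat.strong_induction_on with
  | _ m ih =>
    rcases Nat.lt_or_ge m e with hm | hm
    · rcases Nat.eq_zero_or_pos m with h0 | h0
      · subst h0
        simp [riter, RatFunc.num_X]
      · simp only [hemin m h0 hm, false_iff]
        exact fun hdvd => absurd (Nat.le_of_dvd h0 hdvd) (by omega)
    · have hlt : m - e < m := by omega
      have hsplit : m = (m - e) + e := by omega
      rw [hsplit, riter_add hf,
        zero_comp (riter_ne_zero hf _) (riter_ne_zero hf _) he, ih _ hlt]
      exact ⟨fun h => h.add dvd_rfl, fun h => by simpa using Nat.dvd_sub h dvd_rfl⟩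

end AlgClosed2

section Transfer

variable {F : Type*} [Field F]

/-- Base change of rational functions to the algebraic closure. -/
noncomputable def φF : RatFunc F →+* RatFunc (AlgebraicClosure F) :=
  RatFunc.liftRingHom ((algebraMap (AlgebraicClosure F)[X] (RatFunc (AlgebraicClosure F))).comp
    (mapRingHom (algebraMap F (AlgebraicClosure F))))
    (fun p hp => by
      simp only [Submonoid.mem_comap, mem_nonZeroDivisors_iff_ne_zero, RingHom.coe_comp,
        Function.comp_apply, coe_mapRingHom] at *
      exact RatFunc.algebraMap_ne_zero (Polynomial.map_ne_zero hp))

theorem num_denom_φF (u : RatFunc F) :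
    (φF u).num = u.num.map (algebraMap F (AlgebraicClosure F)) ∧
    (φF u).denom = u.denom.map (algebraMap F (AlgebraicClosure F)) := by
  set σ := algebraMap F (AlgebraicClosure F) with hσ
  have happ : φF u = algebraMap _ _ (u.num.map σ) / algebraMap _ _ (u.denom.map σ) := by
    rw [φF, RatFunc.liftRingHom_apply]; rfl
  have hq0 : u.denom.map σ ≠ 0 := Polynomial.map_ne_zero u.denom_ne_zero
  have key : (φF u).num * (u.denom.map σ) = (u.num.map σ) * (φF u).denom :=
    (RatFunc.num_mul_eq_mul_denom_iff hq0).mpr happ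
  have hcop : IsCoprime (u.num.map σ) (u.denom.map σ) :=
    u.isCoprime_num_denom.map (mapRingHom σ)
  have hmonic : (u.denom.map σ).Monic := u.monic_denom.map σ
  have h1 : (φF u).denom ∣ u.denom.map σ := by
    apply ((φF u).isCoprime_num_denom.symm).dvd_of_dvd_mul_left
    rw [key]
    exact dvd_mul_left _ _
  have h2 : u.denom.map σ ∣ (φF u).denom := by
    apply hcop.symm.dvd_of_dvd_mul_left
    rw [← key]
    exact dvd_mul_left _ _
  have hden : (φF u).denom = u.denom.map σ :=
    eq_of_monic_of_associated (φF u).monic_denom hmonic (associated_of_dvd_dvd h1 h2)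
  refine ⟨?_, hden⟩
  rw [hden] at key
  exact mul_right_cancel₀ hq0 (by rw [key])

theorem aeval_num_φF (u : RatFunc F) (α : AlgebraicClosure F) :
    aeval α u.num = (φF u).num.eval α := by
  rw [(num_denom_φF u).1, Polynomial.eval_map, Polynomial.aeval_def]

theorem eval_zero_num_φF (u : RatFunc F) :
    (φF u).num.eval 0 = 0 ↔ u.num.eval 0 = 0 := by
  rw [(num_denom_φF u).1, Polynomial.eval_map,
    show (0 : AlgebraicClosure F) = algebraMap F (AlgebraicClosure F) 0 by simp,
    Polynomial.eval₂_at_apply]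
  simp

theorem φF_algebraMap (p : F[X]) :
    φF (algebraMap F[X] (RatFunc F) p)
      = algebraMap _ _ (p.map (algebraMap F (AlgebraicClosure F))) := by
  rw [φF, RatFunc.liftRingHom_apply, RatFunc.num_algebraMap, RatFunc.denom_algebraMap]
  simp

theorem φF_comp_algebraMap :
    (φF (F := F)).comp (algebraMap F (RatFunc F)) =
      (algebraMap (AlgebraicClosure F) (RatFunc (AlgebraicClosure F))).comp
        (algebraMap F (AlgebraicClosure F)) := by
  refine RingHom.ext fun c => ?_
  simp only [RingHom.coe_comp, Function.comp_apply]
  rw [RatFunc.algebraMap_eq_C, RatFunc.algebraMap_eq_C, ← RatFunc.algebraMap_C,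
    ← RatFunc.algebraMap_C, φF_algebraMap, Polynomial.map_C]

theorem φF_rcomp (u v : RatFunc F) : φF (rcomp u v) = rcomp (φF u) (φF v) := by
  rw [rcomp_eq, rcomp_eq, map_div₀]
  congr 1
  · rw [Polynomial.aeval_def, Polynomial.hom_eval₂, φF_comp_algebraMap,
      ← Polynomial.eval₂_map, ← Polynomial.aeval_def, (num_denom_φF u).1]
  · rw [Polynomial.aeval_def, Polynomial.hom_eval₂, φF_comp_algebraMap,
      ← Polynomial.eval₂_map, ← Polynomial.aeval_def, (num_denom_φF u).2]

theorem φF_riter (f : RatFunc F) : ∀ k, φF (riter f k) = riter (φF f) k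
  | 0 => by
    rw [riter, riter, RatFunc.X, φF_algebraMap, Polynomial.map_X]
    rfl
  | (k+1) => by rw [riter, riter, φF_rcomp, φF_riter f k]

theorem φF_nonconst {f : RatFunc F} (hd : 2 ≤ rdeg f) :
    ∀ c : AlgebraicClosure F, φF f ≠ RatFunc.C c := by
  intro c h
  have hnum := (num_denom_φF f).1
  have hden := (num_denom_φF f).2
  rw [h, RatFunc.num_C] at hnum
  rw [h, RatFunc.denom_C] at hden
  have hinj : Function.Injective (algebraMap F (AlgebraicClosure F)) :=
    (algebraMap F (AlgebraicClosure F)).injective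
  have h1 : f.num.natDegree = 0 := by
    have := congrArg natDegree hnum
    rwa [natDegree_C, natDegree_map_eq_of_injective hinj, eq_comm] at this
  have h2 : f.denom.natDegree = 0 := by
    have := congrArg natDegree hden
    rwa [natDegree_one, natDegree_map_eq_of_injective hinj, eq_comm] at this
  rw [rdeg, h1, h2] at hd
  omega

end Transfer

end Aux

theorem stmt2 {F : Type*} [Field F] (f : RatFunc F) (hd : 2 ≤ rdeg f)
    (e : ℕ) (he0 : 0 < e) (he : ((riter f e).num).eval 0 = 0)
    (hemin : ∀ k, 0 < k → k < e → ((riter f k).num).eval 0 ≠ 0) :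
    ∀ k ℓ : ℕ, 1 ≤ ℓ → ℓ < k →
      ((∃ α : AlgebraicClosure F,
          Polynomial.aeval α (riter f ℓ).num = 0 ∧ Polynomial.aeval α (riter f k).num = 0)
        → k ≡ ℓ [MOD e]) ∧
      (k ≡ ℓ [MOD e] →
        ∀ α : AlgebraicClosure F,
          Polynomial.aeval α (riter f ℓ).num = 0 → Polynomial.aeval α (riter f k).num = 0) := by
  intro k ℓ hℓ hℓk
  have hnc : ∀ c : AlgebraicClosure F, Aux.φF f ≠ RatFunc.C c := Aux.φF_nonconst hd
  have hR : ∀ m, Aux.φF (riter f m) = riter (Aux.φF f) m := Aux.φF_riter f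
  have hZ : ∀ m, (riter (Aux.φF f) m).num.eval 0 = 0 ↔ (riter f m).num.eval 0 = 0 := by
    intro m
    rw [← hR]
    exact Aux.eval_zero_num_φF _
  have he' : (riter (Aux.φF f) e).num.eval 0 = 0 := (hZ e).mpr he
  have hemin' : ∀ j, 0 < j → j < e → (riter (Aux.φF f) j).num.eval 0 ≠ 0 :=
    fun j h1 h2 h3 => hemin j h1 h2 ((hZ j).mp h3)
  have horb := Aux.orbit_iff hnc he0 he' hemin'
  have hsplit : k = (k - ℓ) + ℓ := (Nat.sub_add_cancel (le_of_lt hℓk)).symm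
  have hconv : ∀ m (α : AlgebraicClosure F),
      Polynomial.aeval α (riter f m).num = 0 ↔ (riter (Aux.φF f) m).num.eval α = 0 := by
    intro m α
    rw [Aux.aeval_num_φF, hR]
  constructor
  · rintro ⟨α, h1, h2⟩
    rw [hconv] at h1 h2
    rw [hsplit, Aux.riter_add hnc] at h2
    have hz := (Aux.zero_comp (Aux.riter_ne_zero hnc _) (Aux.riter_ne_zero hnc _) h1).mp h2
    have hdvd : e ∣ k - ℓ := (horb _).mp hz
    exact ((Nat.modEq_iff_dvd' (le_of_lt hℓk)).mpr hdvd).symm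
  · intro hkl α h1
    rw [hconv] at h1
    rw [hconv]
    have hdvd : e ∣ k - ℓ := (Nat.modEq_iff_dvd' (le_of_lt hℓk)).mp hkl.symm
    have hz := (horb (k - ℓ)).mpr hdvd
    have h2 := (Aux.zero_comp (Aux.riter_ne_zero hnc _)
      (Aux.riter_ne_zero hnc _) h1).mpr hz
    rw [← Aux.riter_add hnc, ← hsplit] at h2
    exact h2
end

section
/- Let f = g/h ∈ 𝔽(X) be in lowest terms with deg f ≥ 2, and write f^(k) = g_k/h_k in lowest terms. Then for all k > ℓ ≥ 1, a pole of f^(ℓ) is a pole of f^(k) if and only if deg g_{k−ℓ} > deg h_{k−ℓ}, and a pole of f^(ℓ) is a zero of f^(k) if and only if deg g_{k−ℓ} < deg h_{k−ℓ}. -/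
open Polynomial

namespace StmtAux
variable {F : Type*} [Field F]

/-- Homogenized substitution polynomial. -/
noncomputable def hpoly (P n d : F[X]) (e : ℕ) : F[X] :=
  ∑ i ∈ Finset.range (e + 1), Polynomial.C (P.coeff i) * n ^ i * d ^ (e - i)

lemma hpoly_map (P : F[X]) (v : RatFunc F) {e : ℕ} (he : P.natDegree < e + 1) :
    algebraMap F[X] (RatFunc F) (hpoly P v.num v.denom e)
      = P.eval₂ (algebraMap F (RatFunc F)) v * (algebraMap F[X] (RatFunc F) v.denom) ^ e := by
  have hd : algebraMap F[X] (RatFunc F) v.denom ≠ 0 :=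
    RatFunc.algebraMap_ne_zero (RatFunc.denom_ne_zero v)
  have hv : v * algebraMap F[X] (RatFunc F) v.denom = algebraMap F[X] (RatFunc F) v.num :=
    ((div_eq_iff hd).mp (RatFunc.num_div_denom v)).symm
  rw [eval₂_eq_sum_range' _ he, hpoly, map_sum, Finset.sum_mul]
  refine Finset.sum_congr rfl fun i hi => ?_
  rw [Finset.mem_range, Nat.lt_succ_iff] at hi
  rw [map_mul, map_mul, map_pow, map_pow, RatFunc.algebraMap_C]
  have : algebraMap F (RatFunc F) (P.coeff i) = RatFunc.C (P.coeff i) := rfl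
  rw [← this, mul_assoc, mul_assoc]
  congr 1
  calc (algebraMap F[X] (RatFunc F) v.num) ^ i * (algebraMap F[X] (RatFunc F) v.denom) ^ (e - i)
      = (v * algebraMap F[X] (RatFunc F) v.denom) ^ i
          * (algebraMap F[X] (RatFunc F) v.denom) ^ (e - i) := by rw [hv]
    _ = v ^ i * ((algebraMap F[X] (RatFunc F) v.denom) ^ i
          * (algebraMap F[X] (RatFunc F) v.denom) ^ (e - i)) := by ring
    _ = v ^ i * (algebraMap F[X] (RatFunc F) v.denom) ^ e := by
          rw [← pow_add]; congr 2; omega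

lemma hpoly_aeval {K : Type*} [Field K] [Algebra F K] (P n d : F[X]) (e : ℕ) {α : K}
    (hα : aeval α d = 0) :
    aeval α (hpoly P n d e) = algebraMap F K (P.coeff e) * (aeval α n) ^ e := by
  rw [hpoly, map_sum, Finset.sum_eq_single_of_mem e (Finset.self_mem_range_succ e)]
  · simp [Nat.sub_self]
  · intro i hi hne
    have h1 : e - i ≠ 0 := by
      rw [Finset.mem_range, Nat.lt_succ_iff] at hi; omega
    simp [hα, zero_pow h1]

lemma hpoly_split (P n d : F[X]) {e : ℕ} (he : P.natDegree ≤ e) :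
    hpoly P n d e = hpoly P n d P.natDegree * d ^ (e - P.natDegree) := by
  rw [hpoly, hpoly, Finset.sum_mul]
  rw [← Finset.sum_subset (Finset.range_subset_range.mpr (by omega :
      P.natDegree + 1 ≤ e + 1))]
  · refine Finset.sum_congr rfl fun i hi => ?_
    rw [Finset.mem_range, Nat.lt_succ_iff] at hi
    have h2 : e - i = (P.natDegree - i) + (e - P.natDegree) := by omega
    rw [h2, pow_add]
    ring
  · intro i hi hni
    rw [Finset.mem_range, Nat.lt_succ_iff] at hi hni
    have : P.coeff i = 0 := coeff_eq_zero_of_natDegree_lt (by omega)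
    simp [this]

lemma hpoly_ne_zero {P n d : F[X]} (hP : P ≠ 0) (hd0 : d ≠ 0) (hdu : ¬ IsUnit d)
    (hcop : IsCoprime n d) {e : ℕ} (he : P.natDegree ≤ e) : hpoly P n d e ≠ 0 := by
  rw [hpoly_split P n d he]
  refine mul_ne_zero ?_ (pow_ne_zero _ hd0)
  intro h0
  have hsplit : hpoly P n d P.natDegree
      = Polynomial.C P.leadingCoeff * n ^ P.natDegree
        + d * ∑ i ∈ Finset.range P.natDegree,
            Polynomial.C (P.coeff i) * n ^ i * d ^ (P.natDegree - 1 - i) := by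
    rw [hpoly, Finset.sum_range_succ, Nat.sub_self, pow_zero, mul_one, add_comm,
      Finset.mul_sum, coeff_natDegree]
    congr 1
    refine Finset.sum_congr rfl fun i hi => ?_
    rw [Finset.mem_range] at hi
    have : P.natDegree - i = (P.natDegree - 1 - i) + 1 := by omega
    rw [this, pow_succ]
    ring
  rw [hsplit] at h0
  have hdvd : d ∣ Polynomial.C P.leadingCoeff * n ^ P.natDegree := by
    refine ⟨-(∑ i ∈ Finset.range P.natDegree,
        Polynomial.C (P.coeff i) * n ^ i * d ^ (P.natDegree - 1 - i)), ?_⟩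
    linear_combination h0
  have hunit : IsUnit (Polynomial.C P.leadingCoeff) :=
    (Polynomial.isUnit_C).mpr (isUnit_iff_ne_zero.mpr (leadingCoeff_ne_zero.mpr hP))
  have hdvd' : d ∣ n ^ P.natDegree := hunit.dvd_mul_left.mp hdvd
  exact hdu ((hcop.symm.pow_right).isUnit_of_dvd hdvd')

/-- Transcendence over the constants. -/
def T (v : RatFunc F) : Prop :=
  ∀ P : F[X], P ≠ 0 → P.eval₂ (algebraMap F (RatFunc F)) v ≠ 0

lemma rcomp_def (u v : RatFunc F) :
    rcomp u v = u.num.eval₂ (algebraMap F (RatFunc F)) v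
      / u.denom.eval₂ (algebraMap F (RatFunc F)) v := rfl

lemma T_of_deg {v : RatFunc F} (hv : 1 ≤ max v.num.natDegree v.denom.natDegree) : T v := by
  intro P hP h0
  have hmap := hpoly_map P v (Nat.lt_succ_self P.natDegree)
  rw [h0, zero_mul] at hmap
  have h1 : hpoly P v.num v.denom P.natDegree = 0 := by
    by_contra h
    exact RatFunc.algebraMap_ne_zero h hmap
  by_cases hd : v.denom.natDegree = 0
  · have hdm : v.denom = 1 := ((RatFunc.monic_denom v).natDegree_eq_zero).mp hd
    have hn : v.num.natDegree ≠ 0 := by omega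
    have hcomp : hpoly P v.num v.denom P.natDegree = P.comp v.num := by
      rw [hdm, hpoly, Polynomial.comp, eval₂_eq_sum_range' (C : F →+* F[X]) (Nat.lt_succ_self _)]
      simp
    rw [hcomp] at h1
    have hlc : (P.comp v.num).leadingCoeff ≠ 0 := by
      rw [Polynomial.leadingCoeff_comp hn]
      exact mul_ne_zero (leadingCoeff_ne_zero.mpr hP)
        (pow_ne_zero _ (leadingCoeff_ne_zero.mpr (fun h => hn (by rw [h]; simp))))
    exact hlc (by rw [h1]; simp)
  · refine hpoly_ne_zero hP (RatFunc.denom_ne_zero v)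
      (fun h => hd (natDegree_eq_zero_of_isUnit h)) (RatFunc.isCoprime_num_denom v) le_rfl h1

lemma T_X : T (RatFunc.X : RatFunc F) := by
  apply T_of_deg
  rw [RatFunc.num_X]
  simp

lemma T.ne_zero {v : RatFunc F} (hv : T v) : v ≠ 0 := by
  have := hv Polynomial.X X_ne_zero
  rwa [eval₂_X] at this

/-- The substitution homomorphism attached to a transcendental `v`. -/
noncomputable def Lhom (v : RatFunc F) (hv : T v) : RatFunc F →+* RatFunc F :=
  RatFunc.liftRingHom (Polynomial.eval₂RingHom (algebraMap F (RatFunc F)) v)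
    (fun p hp => by
      rw [Submonoid.mem_comap]
      refine mem_nonZeroDivisors_iff_ne_zero.mpr ?_
      rw [coe_eval₂RingHom]
      exact hv p (mem_nonZeroDivisors_iff_ne_zero.mp hp))

lemma Lhom_apply (v : RatFunc F) (hv : T v) (u : RatFunc F) :
    Lhom v hv u = rcomp u v := by
  rw [Lhom, RatFunc.liftRingHom_apply, rcomp_def, coe_eval₂RingHom]

lemma Lhom_comp_alg (v : RatFunc F) (hv : T v) :
    (Lhom v hv).comp (algebraMap F (RatFunc F)) = algebraMap F (RatFunc F) := by
  ext c
  rw [RingHom.comp_apply, IsScalarTower.algebraMap_apply F F[X] (RatFunc F) c]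
  have : Lhom v hv (algebraMap F[X] (RatFunc F) (algebraMap F F[X] c))
      = (algebraMap F F[X] c).eval₂ (algebraMap F (RatFunc F)) v := by
    rw [Lhom, RatFunc.liftRingHom_apply, RatFunc.num_algebraMap, RatFunc.denom_algebraMap]
    simp [coe_eval₂RingHom]
  rw [this, Polynomial.algebraMap_eq, eval₂_C,
    IsScalarTower.algebraMap_apply F F[X] (RatFunc F) c, Polynomial.algebraMap_eq]

lemma Lhom_eval₂ (v : RatFunc F) (hv : T v) (x : RatFunc F) (P : F[X]) :
    Lhom v hv (P.eval₂ (algebraMap F (RatFunc F)) x)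
      = P.eval₂ (algebraMap F (RatFunc F)) (Lhom v hv x) := by
  rw [hom_eval₂, Lhom_comp_alg]

lemma rcomp_assoc (u w v : RatFunc F) (hv : T v) :
    rcomp (rcomp u w) v = rcomp u (rcomp w v) := by
  rw [← Lhom_apply v hv, rcomp_def u w, map_div₀, Lhom_eval₂, Lhom_eval₂, Lhom_apply,
    rcomp_def u (rcomp w v)]

lemma T_comp {w f : RatFunc F} (hw : T w) (hf : T f) : T (rcomp f w) := by
  intro P hP
  have h : P.eval₂ (algebraMap F (RatFunc F)) (rcomp f w)
      = Lhom w hw (P.eval₂ (algebraMap F (RatFunc F)) f) := by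
    rw [Lhom_eval₂, Lhom_apply]
  rw [h]
  intro h0
  exact hf P hP ((map_eq_zero_iff _ (Lhom w hw).injective).mp h0)

lemma T_iter {f : RatFunc F} (hf : 1 ≤ max f.num.natDegree f.denom.natDegree) :
    ∀ j, T (riter f j)
  | 0 => T_X
  | j + 1 => T_comp (T_iter hf j) (T_of_deg hf)

lemma riter_add (f : RatFunc F) (ℓ : ℕ) (hv : T (riter f ℓ)) :
    ∀ m, riter f (m + ℓ) = rcomp (riter f m) (riter f ℓ)
  | 0 => by
      rw [Nat.zero_add]
      show riter f ℓ = rcomp RatFunc.X (riter f ℓ)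
      rw [rcomp_def, RatFunc.num_X, RatFunc.denom_X, eval₂_X, eval₂_one, div_one]
  | m + 1 => by
      rw [Nat.add_right_comm]
      show rcomp f (riter f (m + ℓ)) = rcomp (rcomp f (riter f m)) (riter f ℓ)
      rw [riter_add f ℓ hv m, rcomp_assoc _ _ _ hv]

lemma aeval_ne_zero_right {K : Type*} [Field K] [Algebra F K] {p q : F[X]}
    (h : IsCoprime p q) {α : K} (hp : aeval α p = 0) : aeval α q ≠ 0 := by
  obtain ⟨a, b, hab⟩ := h
  intro hq
  have := congrArg (aeval α) hab
  simp [hp, hq] at this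

lemma key (u v : RatFunc F) (hu : u ≠ 0) {α : AlgebraicClosure F}
    (hα : aeval α v.denom = 0) :
    (aeval α (rcomp u v).denom = 0 ↔ u.denom.natDegree < u.num.natDegree) ∧
    (aeval α (rcomp u v).num = 0 ↔ u.num.natDegree < u.denom.natDegree) := by
  set G := u.num with hG
  set H := u.denom with hH
  set n := v.num with hn
  set d := v.denom with hd
  set D := max G.natDegree H.natDegree with hD
  have hGnz : G ≠ 0 := fun h => hu (RatFunc.num_eq_zero_iff.mp h)
  have hHnz : H ≠ 0 := RatFunc.denom_ne_zero u
  have hdnz : d ≠ 0 := RatFunc.denom_ne_zero v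
  have hd1 : d.natDegree ≠ 0 := by
    intro h0
    have : d = 1 := ((RatFunc.monic_denom v).natDegree_eq_zero).mp h0
    rw [this] at hα; simp at hα
  have hdu : ¬ IsUnit d := fun h => hd1 (natDegree_eq_zero_of_isUnit h)
  have hcop : IsCoprime n d := RatFunc.isCoprime_num_denom v
  have hnα : aeval α n ≠ 0 := aeval_ne_zero_right hcop.symm hα
  set N := hpoly G n d D with hN
  set M := hpoly H n d D with hM
  have hMnz : M ≠ 0 := hpoly_ne_zero hHnz hdnz hdu hcop (le_max_right _ _)
  set w := rcomp u v with hw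
  have halgd : algebraMap F[X] (RatFunc F) d ≠ 0 := RatFunc.algebraMap_ne_zero hdnz
  have halgM : algebraMap F[X] (RatFunc F) M ≠ 0 := RatFunc.algebraMap_ne_zero hMnz
  have hwNM : w = algebraMap F[X] (RatFunc F) N / algebraMap F[X] (RatFunc F) M := by
    rw [hw, rcomp_def, hpoly_map G v (Nat.lt_succ_of_le (le_max_left _ _)),
      hpoly_map H v (Nat.lt_succ_of_le (le_max_right _ _)),
      mul_div_mul_right _ _ (pow_ne_zero D halgd)]
  have hcross : w.num * M = N * w.denom := by
    apply RatFunc.algebraMap_injective F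
    rw [map_mul, map_mul]
    rw [← div_eq_div_iff (RatFunc.algebraMap_ne_zero (RatFunc.denom_ne_zero w)) halgM]
    rw [RatFunc.num_div_denom w, hwNM]
  have heqα : aeval α w.num * aeval α M = aeval α N * aeval α w.denom := by
    have := congrArg (aeval α) hcross
    simpa using this
  rw [hpoly_aeval G n d D hα, hpoly_aeval H n d D hα] at heqα
  set A := aeval α w.num with hA
  set B := aeval α w.denom with hB
  set cG := algebraMap F (AlgebraicClosure F) (G.coeff D) with hcG
  set cH := algebraMap F (AlgebraicClosure F) (H.coeff D) with hcH
  have hcancel : A * cH = cG * B := by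
    have hpow : (aeval α n) ^ D ≠ 0 := pow_ne_zero _ hnα
    apply mul_right_cancel₀ hpow
    linear_combination heqα
  have hinj : Function.Injective (algebraMap F (AlgebraicClosure F)) :=
    (algebraMap F (AlgebraicClosure F)).injective
  have hcGiff : cG = 0 ↔ G.natDegree < H.natDegree := by
    rw [hcG, map_eq_zero_iff _ hinj]
    constructor
    · intro h
      by_contra hlt
      push_neg at hlt
      have : D = G.natDegree := by omega
      rw [this] at h
      exact (leadingCoeff_ne_zero.mpr hGnz) h
    · intro h
      exact coeff_eq_zero_of_natDegree_lt (by omega)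
  have hcHiff : cH = 0 ↔ H.natDegree < G.natDegree := by
    rw [hcH, map_eq_zero_iff _ hinj]
    constructor
    · intro h
      by_contra hlt
      push_neg at hlt
      have : D = H.natDegree := by omega
      rw [this] at h
      exact (leadingCoeff_ne_zero.mpr hHnz) h
    · intro h
      exact coeff_eq_zero_of_natDegree_lt (by omega)
  have hnotboth : ¬ (A = 0 ∧ B = 0) := by
    rintro ⟨ha, hb⟩
    exact aeval_ne_zero_right (RatFunc.isCoprime_num_denom w) ha hb
  have hnotbothc : ¬ (cG = 0 ∧ cH = 0) := by
    rintro ⟨hg, hh⟩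
    rw [hcGiff] at hg; rw [hcHiff] at hh; omega
  constructor
  · rw [← hcHiff]
    constructor
    · intro hb
      have hA0 : A ≠ 0 := fun ha => hnotboth ⟨ha, hb⟩
      have : A * cH = 0 := by rw [hcancel, hb, mul_zero]
      exact (mul_eq_zero.mp this).resolve_left hA0
    · intro hh
      have hcG0 : cG ≠ 0 := fun hg => hnotbothc ⟨hg, hh⟩
      have : cG * B = 0 := by rw [← hcancel, hh, mul_zero]
      exact (mul_eq_zero.mp this).resolve_left hcG0
  · rw [← hcGiff]
    constructor
    · intro ha
      have hB0 : B ≠ 0 := fun hb => hnotboth ⟨ha, hb⟩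
      have : cG * B = 0 := by rw [← hcancel, ha, zero_mul]
      exact (mul_eq_zero.mp this).resolve_right hB0
    · intro hg
      have hcH0 : cH ≠ 0 := fun hh => hnotbothc ⟨hg, hh⟩
      have : A * cH = 0 := by rw [hcancel, hg, zero_mul]
      exact (mul_eq_zero.mp this).resolve_right hcH0

end StmtAux

theorem stmt3 {F : Type*} [Field F] (f : RatFunc F) (hd : 2 ≤ rdeg f) :
    ∀ k ℓ : ℕ, 1 ≤ ℓ → ℓ < k →
      ∀ α : AlgebraicClosure F, Polynomial.aeval α (riter f ℓ).denom = 0 →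
        ((Polynomial.aeval α (riter f k).denom = 0 ↔
            (riter f (k - ℓ)).denom.natDegree < (riter f (k - ℓ)).num.natDegree) ∧
         (Polynomial.aeval α (riter f k).num = 0 ↔
            (riter f (k - ℓ)).num.natDegree < (riter f (k - ℓ)).denom.natDegree)) := by
  intro k ℓ hℓ hlt α hα
  have hf1 : 1 ≤ max f.num.natDegree f.denom.natDegree := le_trans (by norm_num) hd
  have hvdeg : 1 ≤ max (riter f ℓ).num.natDegree (riter f ℓ).denom.natDegree := by
    refine le_max_of_le_right ?_
    by_contra h
    push_neg at h
    have h0 : (riter f ℓ).denom.natDegree = 0 := by omega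
    have : (riter f ℓ).denom = 1 :=
      ((RatFunc.monic_denom (riter f ℓ)).natDegree_eq_zero).mp h0
    rw [this] at hα
    simp at hα
  have hv : StmtAux.T (riter f ℓ) := StmtAux.T_of_deg hvdeg
  have hcomp : riter f k = rcomp (riter f (k - ℓ)) (riter f ℓ) := by
    have := StmtAux.riter_add f ℓ hv (k - ℓ)
    rwa [Nat.sub_add_cancel hlt.le] at this
  have hu : riter f (k - ℓ) ≠ 0 := (StmtAux.T_iter hf1 (k - ℓ)).ne_zero
  rw [hcomp]
  exact StmtAux.key (riter f (k - ℓ)) (riter f ℓ) hu hα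
end

section
/- Let 𝔽 be a field of characteristic zero, and let f ∈ 𝔽[X] be a polynomial of degree ≥ 2 that is not a monomial. Then no iterate f^(k) (k ≥ 1) is a monomial. -/
open Polynomial

/-- Iterates of a polynomial: `piter f 0 = X`, `piter f (k+1) = f ∘ (piter f k)`. -/
noncomputable def piter {F : Type*} [Field F] (f : Polynomial F) (k : ℕ) : Polynomial F :=
  (fun p => f.comp p)^[k] Polynomial.X

lemma piter_succ {F : Type*} [Field F] (f : Polynomial F) (k : ℕ) :
    piter f (k + 1) = f.comp (piter f k) :=
  Function.iterate_succ_apply' _ _ _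

lemma piter_natDegree {F : Type*} [Field F] (f : Polynomial F) (k : ℕ) :
    (piter f k).natDegree = f.natDegree ^ k := by
  induction k with
  | zero => simp [piter]
  | succ k ih => rw [piter_succ, natDegree_comp, ih, pow_succ, mul_comm]

lemma piter_comm {F : Type*} [Field F] (f : Polynomial F) (k : ℕ) :
    f.comp (piter f k) = (piter f k).comp f := by
  induction k with
  | zero => simp [piter]
  | succ k ih =>
    rw [piter_succ]
    conv_lhs => rw [ih]
    rw [← comp_assoc, ih]

theorem stmt6 {F : Type*} [Field F] [CharZero F] (f : Polynomial F)
    (hd : 2 ≤ f.natDegree)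
    (hmon : ¬ ∃ (a : F) (m : ℕ), f = C a * X ^ m) :
    ∀ k : ℕ, 1 ≤ k → ¬ ∃ (a : F) (m : ℕ), piter f k = C a * X ^ m := by
  rintro k hk ⟨a, m, h⟩
  set d := f.natDegree with hdd
  have hfne : f ≠ 0 := fun h0 => by simp [h0, natDegree_zero] at hdd; omega
  have hdegk : (piter f k).natDegree = d ^ k := piter_natDegree f k
  have hdk2 : 2 ≤ d ^ k := le_trans hd (Nat.le_self_pow (by omega) d)
  have hpne : piter f k ≠ 0 := fun h0 => by rw [h0, natDegree_zero] at hdegk; omega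
  have ha : a ≠ 0 := by rintro rfl; simp at h; exact hpne h
  have hm : m = d ^ k := by rw [h, natDegree_C_mul_X_pow m a ha] at hdegk; omega
  -- k = 1 case
  rcases Nat.lt_or_ge k 2 with hk1 | hk2
  · interval_cases k
    apply hmon
    exact ⟨a, m, by simpa [piter] using h⟩
  -- k ≥ 2
  set n := d ^ k with hn
  have hdn : d < n := by
    calc d = d ^ 1 := (pow_one d).symm
    _ < d ^ k := Nat.pow_lt_pow_right (by omega) (by omega)
  subst hm
  -- key identity
  have key : f.comp (C a * X ^ n) = C a * f ^ n := by
    have h2 := piter_comm f k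
    rw [h] at h2
    rw [h2, mul_comp, C_comp, X_pow_comp]
  -- E, t, c
  set E := f.eraseLead with hE
  have hEne : E ≠ 0 := by
    intro h0
    apply hmon
    refine ⟨f.leadingCoeff, d, ?_⟩
    conv_lhs => rw [← f.eraseLead_add_C_mul_X_pow]
    rw [← hE, h0, zero_add]
  set t := E.natDegree with ht
  have htd : t < d := lt_of_le_of_lt f.eraseLead_natDegree_le (by omega)
  set c := f.leadingCoeff with hc
  have hcne : c ≠ 0 := leadingCoeff_ne_zero.mpr hfne
  set j0 := (n - 1) * d + t with hj0
  -- LHS coeff at j0 is 0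
  have hndvd : ¬ n ∣ j0 := by
    intro ⟨q, hq⟩
    have h1 : j0 < n * d := by
      have : (n-1) * d + d ≤ n * d := by
        calc (n-1)*d + d = (n-1+1)*d := by ring
        _ ≤ n * d := by apply Nat.mul_le_mul_right; omega
      omega
    have h2 : n * (d - 1) < j0 := by
      have : n * (d-1) + n ≤ (n-1)*d + d := by nlinarith [Nat.sub_add_cancel (by omega : 1 ≤ n), Nat.sub_add_cancel (by omega : 1 ≤ d)]
      omega
    -- so n*(d-1) < n*q < n*d, impossible
    rw [hq] at h1 h2
    have := Nat.lt_of_mul_lt_mul_left h2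
    have := Nat.lt_of_mul_lt_mul_left h1
    omega
  have hL : (f.comp (C a * X ^ n)).coeff j0 = 0 := by
    have hrw : f.comp (C a * X ^ n) = expand F n (f.comp (C a * X)) := by
      rw [expand_eq_comp_X_pow, comp_assoc]
      congr 1
      simp [mul_comp]
    rw [hrw, coeff_expand (by omega : 0 < n)]
    simp [hndvd]
  -- RHS coeff at j0 ≠ 0
  have hfpow : f ^ n = ∑ i ∈ Finset.range (n + 1), E ^ i * (C c * X ^ d) ^ (n - i) * (n.choose i : Polynomial F) := by
    conv_lhs => rw [← f.eraseLead_add_C_mul_X_pow]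
    rw [add_pow]
  have hcoeff : (f ^ n).coeff j0 = c ^ (n - 1) * E.leadingCoeff * n := by
    rw [hfpow, finset_sum_coeff]
    rw [Finset.sum_eq_single_of_mem 1 (Finset.mem_range.mpr (by omega))]
    · have e1 : E ^ 1 * (C c * X ^ d) ^ (n - 1) * ((n.choose 1 : ℕ) : Polynomial F)
          = C (c ^ (n - 1) * (n : F)) * E * X ^ (d * (n - 1)) := by
        rw [Nat.choose_one_right, mul_pow, ← C_pow, ← pow_mul, C_mul, C_eq_natCast]
        ring
      rw [e1, coeff_mul_X_pow', if_pos (by rw [hj0, mul_comm d (n-1)]; omega)]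
      have e2 : j0 - d * (n - 1) = t := by rw [hj0, mul_comm d (n-1)]; omega
      rw [e2, coeff_C_mul, ht, coeff_natDegree]
      ring
    · intro i hi hi1
      rcases Nat.lt_or_ge i 1 with h0 | h1
      · -- i = 0
        have : i = 0 := by omega
        subst this
        simp only [pow_zero, one_mul, Nat.sub_zero, Nat.choose_zero_right, Nat.cast_one, mul_one,
          mul_pow, ← C_pow, ← pow_mul]
        rw [coeff_C_mul, coeff_X_pow, if_neg, mul_zero]
        rw [hj0]
        have h1 : (n-1) * d + d ≤ n * d := by
          calc (n-1)*d + d = (n-1+1)*d := by ring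
          _ ≤ n * d := by apply Nat.mul_le_mul_right; omega
        rw [mul_comm d n]; omega
      · -- i ≥ 2
        have h2i : 2 ≤ i := by omega
        apply coeff_eq_zero_of_natDegree_lt
        have hin : i ≤ n := by simp at hi; omega
        calc (E ^ i * (C c * X ^ d) ^ (n - i) * (n.choose i : Polynomial F)).natDegree
            ≤ (E ^ i * (C c * X ^ d) ^ (n - i)).natDegree + ((n.choose i : Polynomial F)).natDegree := natDegree_mul_le
          _ ≤ (E ^ i).natDegree + ((C c * X ^ d) ^ (n - i)).natDegree + 0 := by
              rw [natDegree_natCast]; exact Nat.add_le_add_right natDegree_mul_le 0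
          _ ≤ i * t + (n - i) * ((C c * X ^ d).natDegree) + 0 := by
              gcongr <;> [exact natDegree_pow_le; exact natDegree_pow_le]
          _ = i * t + (n - i) * d := by rw [natDegree_C_mul_X_pow d c hcne]; omega
          _ < j0 := by
              rw [hj0]
              have key2 : (i - 1) * (t + 1) ≤ (i - 1) * d := Nat.mul_le_mul_left _ htd
              nlinarith [Nat.sub_add_cancel hin, Nat.sub_add_cancel (show 1 ≤ i by omega),
                Nat.sub_add_cancel (show 1 ≤ n by omega), key2, htd, h2i]
  have hR : (C a * f ^ n).coeff j0 ≠ 0 := by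
    rw [coeff_C_mul, hcoeff]
    have hn0 : (n : F) ≠ 0 := Nat.cast_ne_zero.mpr (by omega)
    have hEl : E.leadingCoeff ≠ 0 := leadingCoeff_ne_zero.mpr hEne
    exact mul_ne_zero ha (mul_ne_zero (mul_ne_zero (pow_ne_zero _ hcne) hEl) hn0)
  rw [key] at hL
  exact hR hL
end

section
/- If α ∈ 𝔽_{q^n} is a root of X^m h(X) − g(X) where m is a power of q and f = g/h ∈ 𝔽_q(X) with h(α) ≠ 0, then for all i ≥ 0, α^{m^i} = f^(i)(α). -/
open Polynomial

universe u

theorem stmt12 {F : Type u} [Field F] [Fintype F]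
    {K : Type u} [Field K] [Fintype K] [Algebra F K]
    (n : ℕ) (hcard : Fintype.card K = Fintype.card F ^ n)
    (g h : Polynomial F) (m : ℕ) (hm : ∃ s : ℕ, m = Fintype.card F ^ s)
    (α : K)
    (hroot : α ^ m * Polynomial.aeval α h = Polynomial.aeval α g)
    (hh : Polynomial.aeval α h ≠ 0)
    (hdef : ∀ i : ℕ,
      Polynomial.aeval α (riter (algebraMap (Polynomial F) (RatFunc F) g /
        algebraMap (Polynomial F) (RatFunc F) h) i).denom ≠ 0) :
    ∀ i : ℕ, α ^ (m ^ i) =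
      RatFunc.eval (algebraMap F K) α
        (riter (algebraMap (Polynomial F) (RatFunc F) g /
          algebraMap (Polynomial F) (RatFunc F) h) i) := by
  obtain ⟨s, hs⟩ := hm
  -- characteristic setup
  obtain ⟨p, hp⟩ := CharP.exists F
  haveI : CharP F p := hp
  obtain ⟨t, hpp, hqt⟩ := FiniteField.card F p
  haveI := Fact.mk hpp
  haveI : CharP K p := charP_of_injective_algebraMap (algebraMap F K).injective p
  have hmp : m = p ^ (t * s) := by rw [hs, hqt, ← pow_mul]
  set ψ : K →+* K := iterateFrobenius K p (t * s) with hψdef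
  have hψ : ∀ x : K, ψ x = x ^ m := fun x => by
    rw [hψdef, iterateFrobenius_def, hmp]
  have hψF : ∀ c : F, ψ (algebraMap F K c) = algebraMap F K c := fun c => by
    rw [hψ, ← map_pow, hs, FiniteField.pow_card_pow]
  let Ψ : K →ₐ[F] K := { ψ with commutes' := hψF }
  have hstep : ∀ (r : Polynomial F) (x : K), aeval (x ^ m) r = (aeval x r) ^ m := by
    intro r x
    have h1 : aeval (Ψ x) r = Ψ (aeval x r) := Polynomial.aeval_algHom_apply Ψ x r
    have h2 : Ψ x = x ^ m := hψ x
    have h3 : Ψ (aeval x r) = (aeval x r) ^ m := hψ _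
    rw [← h2, h1, h3]
  have hpow : ∀ (r : Polynomial F) (k : ℕ) (x : K),
      aeval (x ^ m ^ k) r = (aeval x r) ^ m ^ k := by
    intro r k
    induction k with
    | zero => intro x; simp
    | succ k ih =>
      intro x
      rw [pow_succ, pow_mul, hstep, ih, ← pow_mul, ← pow_succ]
  -- evaluation of rational functions
  have heval : ∀ x : RatFunc F,
      RatFunc.eval (algebraMap F K) α x = aeval α x.num / aeval α x.denom := by
    intro x
    rw [RatFunc.eval, ← aeval_def, ← aeval_def]
  set ι := algebraMap (Polynomial F) (RatFunc F) with hι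
  have evalQuot : ∀ (x : RatFunc F) (pp qq : Polynomial F),
      x = ι pp / ι qq → aeval α qq ≠ 0 →
      RatFunc.eval (algebraMap F K) α x = aeval α pp / aeval α qq := by
    intro x pp qq hx hq
    have hq0 : qq ≠ 0 := by rintro rfl; simp at hq
    have hdd : x.denom ∣ qq := (RatFunc.denom_dvd hq0).mpr ⟨pp, hx⟩
    obtain ⟨r, hr⟩ := hdd
    have hden : aeval α x.denom ≠ 0 := by
      intro h0
      apply hq
      rw [hr, map_mul, h0, zero_mul]
    have hnum : x.num * qq = pp * x.denom := (RatFunc.num_mul_eq_mul_denom_iff hq0).mpr hx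
    rw [heval, div_eq_div_iff hden hq, ← map_mul, ← map_mul, hnum, mul_comm]
  set uu := ι g / ι h with hu
  intro i
  induction i with
  | zero =>
    simp only [pow_zero, pow_one, riter, RatFunc.eval_X]
  | succ i ih =>
    set w := riter uu i with hw
    have hB : aeval α w.denom ≠ 0 := hdef i
    set A := w.num with hA
    set B := w.denom with hBdef
    set a1 := aeval α A with ha1
    set b1 := aeval α B with hb1
    set β := RatFunc.eval (algebraMap F K) α w with hβ
    have hβval : β = a1 / b1 := heval w
    have hβα : β = α ^ m ^ i := ih.symm
    have hh0 : h ≠ 0 := by rintro rfl; simp at hh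
    have hιh : ι h ≠ 0 := RatFunc.algebraMap_ne_zero hh0
    set N := uu.num with hN
    set D := uu.denom with hD
    have hND : N * h = g * D := (RatFunc.num_mul_eq_mul_denom_iff hh0).mpr hu
    have hDh : D ∣ h := (RatFunc.denom_dvd hh0).mpr ⟨g, hu⟩
    -- root relation transported to β
    have hβh : aeval β h ≠ 0 := by
      rw [hβα, hpow]
      exact pow_ne_zero _ hh
    have hβroot : β ^ m * aeval β h = aeval β g := by
      rw [hβα, hpow, hpow, ← pow_mul, mul_comm (m ^ i) m, pow_mul, ← mul_pow, hroot]
    have hβD : aeval β D ≠ 0 := by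
      obtain ⟨r, hr⟩ := hDh
      intro h0
      apply hβh
      rw [hr, map_mul, h0, zero_mul]
    have hβND : aeval β N = β ^ m * aeval β D := by
      have h1 : aeval β N * aeval β h = aeval β g * aeval β D := by
        rw [← map_mul, ← map_mul, hND]
      rw [← hβroot] at h1
      have h2 : aeval β N * aeval β h = β ^ m * aeval β D * aeval β h := by
        rw [h1]; ring
      exact mul_right_cancel₀ hβh h2
    -- composition machinery
    have hB0 : B ≠ 0 := RatFunc.denom_ne_zero w
    have hιB : ι B ≠ 0 := RatFunc.algebraMap_ne_zero hB0
    set Pc : Polynomial F → Polynomial F := fun r =>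
      ∑ j ∈ Finset.range (r.natDegree + 1),
        Polynomial.C (r.coeff j) * A ^ j * B ^ (r.natDegree - j) with hPc
    have hwAB : w = ι A / ι B := (RatFunc.num_div_denom w).symm
    have hC1 : ∀ r : Polynomial F,
        r.eval₂ (algebraMap F (RatFunc F)) w * (ι B) ^ r.natDegree = ι (Pc r) := by
      intro r
      rw [Polynomial.eval₂_eq_sum_range, Finset.sum_mul, hPc, map_sum]
      refine Finset.sum_congr rfl fun j hj => ?_
      have hj' : j ≤ r.natDegree := Nat.lt_succ_iff.mp (Finset.mem_range.mp hj)
      rw [map_mul, map_mul, map_pow, map_pow, RatFunc.algebraMap_C,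
        ← RatFunc.algebraMap_eq_C, hwAB, div_pow,
        pow_sub₀ (ι B) hιB hj']
      field_simp
    have hC2 : ∀ r : Polynomial F,
        aeval α (Pc r) = b1 ^ r.natDegree * aeval β r := by
      intro r
      rw [hPc]
      simp only [map_sum, map_mul, map_pow, aeval_C]
      have hbr : aeval β r = ∑ j ∈ Finset.range (r.natDegree + 1),
          algebraMap F K (r.coeff j) * β ^ j := by
        rw [aeval_def, Polynomial.eval₂_eq_sum_range]
      rw [hbr, Finset.mul_sum]
      refine Finset.sum_congr rfl fun j hj => ?_
      have hj' : j ≤ r.natDegree := Nat.lt_succ_iff.mp (Finset.mem_range.mp hj)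
      rw [hβval, div_pow, pow_sub₀ b1 hB hj']
      field_simp
      ring
    -- the (i+1)-st iterate as an explicit quotient of polynomials
    have hPD : aeval α (Pc D) ≠ 0 := by
      rw [hC2]
      exact mul_ne_zero (pow_ne_zero _ hB) hβD
    have hPD0 : Pc D ≠ 0 := by rintro h0; rw [h0] at hPD; simp at hPD
    have hιPD : ι (Pc D) ≠ 0 := RatFunc.algebraMap_ne_zero hPD0
    have hDw : D.eval₂ (algebraMap F (RatFunc F)) w ≠ 0 := by
      intro h0
      apply hιPD
      rw [← hC1 D, h0, zero_mul]
    have hiter : riter uu (i + 1) =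
        ι (Pc N * B ^ D.natDegree) / ι (Pc D * B ^ N.natDegree) := by
      have e1 := hC1 N
      have e2 := hC1 D
      have hq' : ι (Pc D * B ^ N.natDegree) ≠ 0 := by
        rw [map_mul, map_pow]
        exact mul_ne_zero hιPD (pow_ne_zero _ hιB)
      have lhs : riter uu (i + 1) =
          N.eval₂ (algebraMap F (RatFunc F)) w / D.eval₂ (algebraMap F (RatFunc F)) w := rfl
      rw [lhs, div_eq_div_iff hDw hq', map_mul, map_mul, map_pow, map_pow, ← e1, ← e2]
      ring
    have heval' := evalQuot (riter uu (i + 1)) _ _ hiter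
      (by rw [map_mul, map_pow, hC2]
          exact mul_ne_zero (mul_ne_zero (pow_ne_zero _ hB) hβD) (pow_ne_zero _ hB))
    rw [heval']
    rw [map_mul, map_mul, map_pow, map_pow, hC2, hC2, hβND]
    rw [pow_succ, pow_mul, ← hβα]
    field_simp
    rw [← hb1]
    field_simp
end

section
/- Let 𝔽 be a field of characteristic zero and f_1, …, f_n ∈ 𝔽[X] distinct polynomials, not all constant, with degrees d_1 ≤ ⋯ ≤ d_n, and set C = d_n · n(n−1)/2. If u ∈ 𝔽[X] is a monic polynomial such that f_1 + u, …, f_n + u are multiplicatively dependent, then deg u ≤ C + 2d_n − 1. -/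
open Polynomial UniqueFactorizationMonoid

private lemma aux_monic_pow_inj {F : Type*} [Field F] [DecidableEq F] {a b : Polynomial F}
    (ha : a.Monic) (hb : b.Monic) {m : ℕ} (hm : m ≠ 0) (h : a ^ m = b ^ m) : a = b := by
  classical
  have h1 := congrArg (normalizedFactors (α := Polynomial F)) h
  rw [normalizedFactors_pow, normalizedFactors_pow] at h1
  have h2 : normalizedFactors a = normalizedFactors b := by
    refine Multiset.ext.mpr fun p => ?_
    have := congrArg (Multiset.count p) h1
    rw [Multiset.count_nsmul, Multiset.count_nsmul] at this
    exact Nat.eq_of_mul_eq_mul_left (Nat.pos_of_ne_zero hm) this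
  exact Polynomial.eq_of_monic_of_associated ha hb
    ((prod_normalizedFactors ha.ne_zero).symm.trans
      (h2 ▸ prod_normalizedFactors hb.ne_zero))

private lemma aux_radical_dvd {F : Type*} [Field F] [DecidableEq F] {a N : Polynomial F}
    (h : ∀ p : Polynomial F, Prime p → p ∣ a → p ∣ N) :
    radical a ∣ N := by
  have hmem0 : ∀ p, p ∈ primeFactors a → p ∈ normalizedFactors a := by
    intro p hp
    simp only [UniqueFactorizationMonoid.primeFactors, Multiset.mem_toFinset] at hp
    exact hp
  have hmem : ∀ p, p ∈ primeFactors a → Prime p ∧ p ∣ a := fun p hp =>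
    ⟨prime_of_normalized_factor p (hmem0 p hp), dvd_of_mem_normalizedFactors (hmem0 p hp)⟩
  have hnorm : ∀ p, p ∈ primeFactors a → normalize p = p := fun p hp =>
    normalize_normalized_factor p (hmem0 p hp)
  refine Finset.prod_dvd_of_coprime ?_ ?_
  · intro p hp q hq hpq
    have hp' := hmem p hp
    have hq' := hmem q hq
    refine (hp'.1.coprime_iff_not_dvd).mpr fun hdvd => hpq ?_
    have hass := (hp'.1.irreducible).associated_of_dvd hq'.1.irreducible hdvd
    exact dvd_antisymm_of_normalize_eq (hnorm p hp) (hnorm q hq) hdvd hass.symm.dvd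
  · intro p hp
    exact h p (hmem p hp).1 (hmem p hp).2

theorem stmt16 {F : Type*} [Field F] [CharZero F] (n : ℕ) (f : Fin n → Polynomial F)
    (hinj : Function.Injective f) (hnc : ∃ i, (f i).natDegree ≠ 0)
    (D : ℕ) (hD : D = Finset.univ.sup fun i => (f i).natDegree)
    (u : Polynomial F) (hu : u.Monic)
    (hdep : ∃ k : Fin n → ℤ, (∃ i, k i ≠ 0) ∧
      ∏ i, (algebraMap (Polynomial F) (RatFunc F) (f i + u)) ^ (k i) = 1) :
    u.natDegree ≤ D * (n * (n - 1)) / 2 + 2 * D - 1 := by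
  classical
  obtain ⟨k, ⟨iw, hiw⟩, hprod⟩ := hdep
  obtain ⟨ic, hic⟩ := hnc
  letI : DecidableEq F := Classical.decEq F
  have hfD : ∀ i, (f i).natDegree ≤ D := by
    intro i
    rw [hD]
    exact Finset.le_sup (f := fun i => (f i).natDegree) (Finset.mem_univ i)
  have hD1 : 1 ≤ D := le_trans (Nat.one_le_iff_ne_zero.mpr hic) (hfD ic)
  obtain ⟨X, hX⟩ : ∃ X, D * (n * (n - 1)) / 2 = X := ⟨_, rfl⟩
  rw [hX]
  by_cases hud : u.natDegree ≤ D
  · omega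
  push_neg at hud
  set d := u.natDegree with hd
  set g : Fin n → Polynomial F := fun i => f i + u with hg
  have hgm : ∀ i, (g i).Monic := fun i =>
    hu.add_of_right (degree_lt_degree (lt_of_le_of_lt (hfD i) hud))
  have hgd : ∀ i, (g i).natDegree = d := by
    intro i
    have : (g i).degree = u.degree :=
      degree_add_eq_right_of_degree_lt (degree_lt_degree (lt_of_le_of_lt (hfD i) hud))
    exact natDegree_eq_of_degree_eq this
  have hg0 : ∀ i, g i ≠ 0 := fun i => (hgm i).ne_zero
  set x : Fin n → RatFunc F := fun i => algebraMap (Polynomial F) (RatFunc F) (g i) with hx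
  have hx0 : ∀ i, x i ≠ 0 := fun i =>
    (map_ne_zero_iff _ (RatFunc.algebraMap_injective F)).2 (hg0 i)
  set P : Polynomial F := ∏ i, g i ^ (k i).toNat with hP
  set Q : Polynomial F := ∏ i, g i ^ (-(k i)).toNat with hQ
  have hPQ : P = Q := by
    apply RatFunc.algebraMap_injective F
    rw [hP, hQ, map_prod, map_prod]
    simp only [map_pow]
    have key : ∀ i : Fin n, (x i) ^ (k i).toNat = (x i) ^ (k i) * (x i) ^ (-(k i)).toNat := by
      intro i
      rw [← zpow_natCast (x i) (k i).toNat, ← zpow_natCast (x i) (-(k i)).toNat,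
        ← zpow_add₀ (hx0 i)]
      congr 1
      omega
    calc (∏ i, (x i) ^ (k i).toNat)
        = ∏ i, ((x i) ^ (k i) * (x i) ^ (-(k i)).toNat) := Finset.prod_congr rfl fun i _ => key i
      _ = (∏ i, (x i) ^ (k i)) * ∏ i, (x i) ^ (-(k i)).toNat := Finset.prod_mul_distrib
      _ = ∏ i, (x i) ^ (-(k i)).toNat := by rw [hprod, one_mul]
  have hPdeg : P.natDegree = ∑ i, (k i).toNat * d := by
    rw [hP, natDegree_prod _ _ fun i _ => pow_ne_zero _ (hg0 i)]
    exact Finset.sum_congr rfl fun i _ => by rw [natDegree_pow, hgd i]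
  have hQdeg : Q.natDegree = ∑ i, (-(k i)).toNat * d := by
    rw [hQ, natDegree_prod _ _ fun i _ => pow_ne_zero _ (hg0 i)]
    exact Finset.sum_congr rfl fun i _ => by rw [natDegree_pow, hgd i]
  have hsum0 : ∑ i, k i = 0 := by
    have h1 : ∑ i, (k i).toNat = ∑ i, (-(k i)).toNat := by
      have heq : (∑ i, (k i).toNat) * d = (∑ i, (-(k i)).toNat) * d := by
        rw [Finset.sum_mul, Finset.sum_mul, ← hPdeg, ← hQdeg, hPQ]
      exact Nat.eq_of_mul_eq_mul_right (by omega) heq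
    have h2 : ∑ i, k i = (∑ i, ((k i).toNat : ℤ)) - ∑ i, ((-(k i)).toNat : ℤ) := by
      rw [← Finset.sum_sub_distrib]
      exact Finset.sum_congr rfl fun i _ => by omega
    rw [h2]
    have h3 : ((∑ i, (k i).toNat : ℕ) : ℤ) = ((∑ i, (-(k i)).toNat : ℕ) : ℤ) := by rw [h1]
    push_cast at h3
    omega
  have hexpos : ∃ i, 0 < k i := by
    by_contra hcon
    push_neg at hcon
    have hz : ∀ i ∈ Finset.univ, -k i = 0 := by
      refine (Finset.sum_eq_zero_iff_of_nonneg fun i _ => neg_nonneg.2 (hcon i)).1 ?_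
      rw [Finset.sum_neg_distrib, hsum0, neg_zero]
    exact hiw (by have := hz iw (Finset.mem_univ iw); omega)
  have hexneg : ∃ j, k j < 0 := by
    by_contra hcon
    push_neg at hcon
    have hz : ∀ i ∈ Finset.univ, k i = 0 :=
      (Finset.sum_eq_zero_iff_of_nonneg fun i _ => hcon i).1 hsum0
    exact hiw (hz iw (Finset.mem_univ iw))
  obtain ⟨i₁, hi₁⟩ := hexpos
  obtain ⟨j₁, hj₁⟩ := hexneg
  have hne : i₁ ≠ j₁ := fun h => by rw [h] at hi₁; omega
  set pos : Finset (Fin n) := Finset.univ.filter (fun i => 0 < k i) with hpos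
  set neg : Finset (Fin n) := Finset.univ.filter (fun i => k i < 0) with hneg
  -- key divisibility facts
  have keyP : ∀ p : Polynomial F, Prime p → ∀ i, 0 < k i → p ∣ g i →
      p ∣ ∏ j ∈ neg, (f i - f j) := by
    intro p hp i hki hpg
    have h1 : p ∣ P := by
      refine dvd_trans (dvd_trans hpg (dvd_pow_self (g i) ?_)) (Finset.dvd_prod_of_mem _ (Finset.mem_univ i))
      omega
    rw [hPQ] at h1
    obtain ⟨j, -, hj⟩ := (hp.dvd_finset_prod_iff _).1 h1
    have hkj : k j < 0 := by
      by_contra hc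
      push_neg at hc
      rw [(by omega : (-(k j)).toNat = 0), pow_zero] at hj
      exact hp.not_unit (isUnit_of_dvd_one hj)
    have hpj : p ∣ g j := hp.dvd_of_dvd_pow hj
    have hsub : p ∣ f i - f j := by
      have : g i - g j = f i - f j := by rw [hg]; ring
      exact this ▸ dvd_sub hpg hpj
    exact dvd_trans hsub (Finset.dvd_prod_of_mem _ (by simp [hneg, hkj]))
  have keyQ : ∀ p : Polynomial F, Prime p → ∀ j, k j < 0 → p ∣ g j →
      p ∣ ∏ i ∈ pos, (f i - f j) := by
    intro p hp j hkj hpg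
    have h1 : p ∣ Q := by
      refine dvd_trans (dvd_trans hpg (dvd_pow_self (g j) ?_)) (Finset.dvd_prod_of_mem _ (Finset.mem_univ j))
      omega
    rw [← hPQ] at h1
    obtain ⟨i, -, hi⟩ := (hp.dvd_finset_prod_iff _).1 h1
    have hki : 0 < k i := by
      by_contra hc
      push_neg at hc
      rw [(by omega : (k i).toNat = 0), pow_zero] at hi
      exact hp.not_unit (isUnit_of_dvd_one hi)
    have hpi : p ∣ g i := hp.dvd_of_dvd_pow hi
    have hsub : p ∣ f i - f j := by
      have : g i - g j = f i - f j := by rw [hg]; ring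
      exact this ▸ dvd_sub hpi hpg
    exact dvd_trans hsub (Finset.dvd_prod_of_mem _ (by simp [hpos, hki]))
  -- the difference polynomials
  have hfne : ∀ i j : Fin n, k i ≠ k j → f i - f j ≠ 0 := by
    intro i j hkij
    refine sub_ne_zero.2 fun hc => hkij ?_
    rw [hinj hc]
  set N₁ : Polynomial F := ∏ j ∈ neg, (f i₁ - f j) with hN₁
  set N₂ : Polynomial F := ∏ i ∈ pos, (f i - f j₁) with hN₂
  have hN₁0 : N₁ ≠ 0 := by
    rw [hN₁]
    refine Finset.prod_ne_zero_iff.2 fun j hj => hfne i₁ j ?_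
    rw [hneg] at hj
    simp only [Finset.mem_filter] at hj
    omega
  have hN₂0 : N₂ ≠ 0 := by
    rw [hN₂]
    refine Finset.prod_ne_zero_iff.2 fun i hi => hfne i j₁ ?_
    rw [hpos] at hi
    simp only [Finset.mem_filter] at hi
    omega
  have hN₁deg : N₁.natDegree ≤ D * neg.card := by
    calc N₁.natDegree ≤ ∑ j ∈ neg, (f i₁ - f j).natDegree := natDegree_prod_le _ _
      _ ≤ ∑ _j ∈ neg, D := Finset.sum_le_sum fun j _ =>
          le_trans (natDegree_sub_le _ _) (max_le (hfD i₁) (hfD j))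
      _ = D * neg.card := by rw [Finset.sum_const, smul_eq_mul, mul_comm]
  have hN₂deg : N₂.natDegree ≤ D * pos.card := by
    calc N₂.natDegree ≤ ∑ i ∈ pos, (f i - f j₁).natDegree := natDegree_prod_le _ _
      _ ≤ ∑ _i ∈ pos, D := Finset.sum_le_sum fun i _ =>
          le_trans (natDegree_sub_le _ _) (max_le (hfD i) (hfD j₁))
      _ = D * pos.card := by rw [Finset.sum_const, smul_eq_mul, mul_comm]
  have hcards : pos.card + neg.card ≤ n := by
    have hdisj : Disjoint pos neg := by
      rw [Finset.disjoint_left]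
      intro a ha hb
      rw [hpos] at ha; rw [hneg] at hb
      simp only [Finset.mem_filter] at ha hb
      omega
    calc pos.card + neg.card = (pos ∪ neg).card := (Finset.card_union_of_disjoint hdisj).symm
      _ ≤ (Finset.univ : Finset (Fin n)).card := Finset.card_le_card (Finset.subset_univ _)
      _ = n := by simp
  have hposcard : 1 ≤ pos.card := Finset.card_pos.2 ⟨i₁, by simp [hpos, hi₁]⟩
  have hnegcard : 1 ≤ neg.card := Finset.card_pos.2 ⟨j₁, by simp [hneg, hj₁]⟩
  have hn2 : 2 ≤ n := by omega
  rcases eq_or_lt_of_le hn2 with hn2' | hn3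
  · -- n = 2 : contradiction via pow injectivity
    exfalso
    have huniv : (Finset.univ : Finset (Fin n)) = {i₁, j₁} := by
      symm
      apply Finset.eq_of_subset_of_card_le (Finset.subset_univ _)
      rw [Finset.card_univ, Fintype.card_fin, Finset.card_insert_of_notMem (by simp [hne]),
        Finset.card_singleton]
      omega
    have hsum2 : k i₁ + k j₁ = 0 := by
      rw [← hsum0, huniv, Finset.sum_pair hne]
    have hPe : P = g i₁ ^ (k i₁).toNat := by
      rw [hP, huniv, Finset.prod_pair hne, (by omega : (k j₁).toNat = 0), pow_zero, mul_one]
    have hQe : Q = g j₁ ^ (k i₁).toNat := by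
      rw [hQ, huniv, Finset.prod_pair hne, (by omega : (-(k i₁)).toNat = 0), pow_zero, one_mul]
      congr 1
      omega
    have hgeq : g i₁ = g j₁ :=
      aux_monic_pow_inj (hgm i₁) (hgm j₁) (by omega : (k i₁).toNat ≠ 0) (by rw [← hPe, ← hQe, hPQ])
    have : f i₁ = f j₁ := by
      have := hgeq
      rw [hg] at this
      simpa using this
    exact hne (hinj this)
  · -- n ≥ 3 : Mason-Stothers
    obtain ⟨a', b', c', hrel, hca, hcb⟩ :=
      UniqueFactorizationMonoid.exists_reduced_factors' (g i₁) (g j₁) (hg0 j₁)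
    have hab : IsCoprime a' b' := hrel.isCoprime
    have ha'0 : a' ≠ 0 := fun h => hg0 i₁ (by rw [← hca, h, mul_zero])
    have hb'0 : b' ≠ 0 := fun h => hg0 j₁ (by rw [← hcb, h, mul_zero])
    have hc'0 : c' ≠ 0 := fun h => hg0 i₁ (by rw [← hca, h, zero_mul])
    set A : Polynomial F := f i₁ - f j₁ with hA
    have hA0 : A ≠ 0 := hfne i₁ j₁ (by omega)
    set e : Polynomial F := a' - b' with he
    have hAe : A = c' * e := by
      rw [he, hA, mul_sub, hca, hcb, hg]; ring
    have he0 : e ≠ 0 := fun h => hA0 (by rw [hAe, h, mul_zero])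
    -- coprimality
    have heb : IsCoprime e b' := by
      have := hab.add_mul_left_left (-1)
      simpa [he, sub_eq_add_neg] using this
    have hea : IsCoprime e a' := by
      have := (hab.symm.add_mul_left_left (-1)).neg_left
      have h2 : -(b' + a' * -1) = e := by rw [he]; ring
      rw [h2] at this
      exact this.symm.symm
    -- degrees of a', c'
    have hdadc : a'.natDegree + c'.natDegree = d := by
      have := congrArg Polynomial.natDegree hca
      rw [natDegree_mul hc'0 ha'0, hgd i₁] at this
      omega
    have hc'deg : c'.natDegree ≤ D := by
      refine natDegree_le_of_dvd ⟨e, hAe⟩ hA0 |>.trans ?_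
      exact le_trans (natDegree_sub_le _ _) (max_le (hfD i₁) (hfD j₁))
    have ha'pos : 1 ≤ a'.natDegree := by
      have hAdeg : A.natDegree ≤ D := le_trans (natDegree_sub_le _ _) (max_le (hfD i₁) (hfD j₁))
      omega
    -- apply Mason-Stothers to e + b' + (-a') = 0
    have habc := Polynomial.abc he0 hb'0 (neg_ne_zero.2 ha'0) heb
      (by rw [he]; ring)
    rcases habc with ⟨-, -, hmain⟩ | ⟨-, -, hda⟩
    · -- main branch
      have hrad : radical (e * b' * -a') = radical e * radical b' * radical a' := by
        have h1 : e * b' * -a' = -(e * b' * a') := by ring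
        rw [h1, UniqueFactorizationDomain.radical_neg,
          UniqueFactorizationMonoid.radical_mul (hea.mul_left hab.symm).isRelPrime,
          UniqueFactorizationMonoid.radical_mul heb.isRelPrime]
      have hre : (radical e).natDegree ≤ D := by
        refine (natDegree_le_of_dvd (dvd_trans (radical_dvd_self (a := e)) ⟨c', by rw [hAe]; ring⟩) hA0).trans ?_
        exact le_trans (natDegree_sub_le _ _) (max_le (hfD i₁) (hfD j₁))
      have hra : (radical a').natDegree ≤ D * neg.card := by
        refine (natDegree_le_of_dvd (aux_radical_dvd ?_) hN₁0).trans hN₁deg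
        intro p hp hpa
        exact keyP p hp i₁ hi₁ (dvd_trans hpa ⟨c', by rw [← hca]; ring⟩)
      have hrb : (radical b').natDegree ≤ D * pos.card := by
        refine (natDegree_le_of_dvd (aux_radical_dvd ?_) hN₂0).trans hN₂deg
        intro p hp hpb
        exact keyQ p hp j₁ hj₁ (dvd_trans hpb ⟨c', by rw [← hcb]; ring⟩)
      have hradsum : (radical (e * b' * -a')).natDegree
          = (radical e).natDegree + (radical b').natDegree + (radical a').natDegree := by
        rw [hrad, natDegree_mul (mul_ne_zero (radical_ne_zero (a := e)) (radical_ne_zero (a := b'))) (radical_ne_zero (a := a')),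
          natDegree_mul (radical_ne_zero (a := e)) (radical_ne_zero (a := b'))]
      rw [natDegree_neg] at hmain
      rw [hradsum] at hmain
      -- now finish arithmetic
      have hcard2 : D * (pos.card + neg.card) ≤ D * n := Nat.mul_le_mul_left D hcards
      have hXbig : D * n ≤ X := by
        rw [← hX]
        rw [Nat.le_div_iff_mul_le (by omega : 0 < 2)]
        have h2n : 2 * n ≤ n * (n - 1) := by
          have : 2 ≤ n - 1 := by omega
          calc 2 * n = n * 2 := by ring
            _ ≤ n * (n - 1) := Nat.mul_le_mul_left n this
        calc D * n * 2 = D * (2 * n) := by ring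
          _ ≤ D * (n * (n - 1)) := Nat.mul_le_mul_left D h2n
      have hDpn : D * pos.card + D * neg.card = D * (pos.card + neg.card) := by ring
      omega
    · -- derivative branch is impossible
      exfalso
      rw [derivative_neg, neg_eq_zero] at hda
      have := natDegree_eq_zero_of_derivative_eq_zero hda
      omega
end

section
/- Let 𝔽 be a field of characteristic zero, and let P_1, …, P_n ∈ 𝔽[X] be nonzero polynomials that are multiplicatively dependent and such that no proper subset of {P_1,…,P_n} is multiplicatively dependent. Then for every i, each root of P_i (in the algebraic closure) is a root of P_j for some j ≠ i. -/
theorem stmt18 {F : Type*} [Field F] [CharZero F] (n : ℕ) (P : Fin n → Polynomial F)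
    (hP : ∀ i, P i ≠ 0)
    (hdep : ∃ k : Fin n → ℤ, (∃ i, k i ≠ 0) ∧
      ∏ i, (algebraMap (Polynomial F) (RatFunc F) (P i)) ^ (k i) = 1)
    (hmin : ∀ s : Finset (Fin n), s ≠ Finset.univ →
      ¬ ∃ k : Fin n → ℤ, (∃ i ∈ s, k i ≠ 0) ∧
        ∏ i ∈ s, (algebraMap (Polynomial F) (RatFunc F) (P i)) ^ (k i) = 1) :
    ∀ i, ∀ α : AlgebraicClosure F, Polynomial.aeval α (P i) = 0 →
      ∃ j, j ≠ i ∧ Polynomial.aeval α (P j) = 0 := by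
  classical
  obtain ⟨k, ⟨i0, hi0⟩, hrel⟩ := hdep
  set x : Fin n → RatFunc F := fun i => algebraMap (Polynomial F) (RatFunc F) (P i) with hx
  have hxne : ∀ i, x i ≠ 0 := fun i => by
    simpa [hx] using (map_ne_zero_iff _ (RatFunc.algebraMap_injective F)).mpr (hP i)
  -- every exponent is nonzero
  have hknz : ∀ i, k i ≠ 0 := by
    intro i hki
    have hs : (Finset.univ.erase i : Finset (Fin n)) ≠ Finset.univ :=
      Finset.erase_ne_self.mpr (Finset.mem_univ i)
    refine hmin _ hs ⟨k, ⟨i0, ?_, hi0⟩, ?_⟩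
    · exact Finset.mem_erase.mpr ⟨fun h => hi0 (h ▸ hki), Finset.mem_univ _⟩
    · rw [Finset.prod_erase _ (by rw [hki, zpow_zero])]
      exact hrel
  intro i α hroot
  by_contra hcon
  push_neg at hcon
  -- polynomial identity from the multiplicative relation
  set a : Fin n → ℕ := fun j => (k j).toNat
  set b : Fin n → ℕ := fun j => (-(k j)).toNat
  have hab : ∀ j, (k j) = (a j : ℤ) - (b j : ℤ) := fun j => by
    simp only [a, b]; omega
  have hprod : (∏ j, x j ^ a j) = ∏ j, x j ^ b j := by
    have : (∏ j, x j ^ a j) / (∏ j, x j ^ b j) = 1 := by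
      rw [← Finset.prod_div_distrib, ← hrel]
      refine Finset.prod_congr rfl fun j _ => ?_
      rw [hab j, zpow_sub₀ (hxne j), zpow_natCast, zpow_natCast]
    have hbne : (∏ j, x j ^ b j) ≠ 0 :=
      Finset.prod_ne_zero_iff.mpr fun j _ => pow_ne_zero _ (hxne j)
    field_simp at this
    exact this
  have hpoly : (∏ j, P j ^ a j) = ∏ j, P j ^ b j := by
    apply RatFunc.algebraMap_injective F
    simpa [map_prod, map_pow, hx] using hprod
  -- map to the algebraic closure
  set φ := algebraMap F (AlgebraicClosure F)
  set Q : Fin n → Polynomial (AlgebraicClosure F) := fun j => (P j).map φ with hQ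
  have hQne : ∀ j, Q j ≠ 0 := fun j =>
    (Polynomial.map_ne_zero_iff (algebraMap F (AlgebraicClosure F)).injective).mpr (hP j)
  have hQeq : (∏ j, Q j ^ a j) = ∏ j, Q j ^ b j := by
    have := congrArg (Polynomial.map φ) hpoly
    simpa [Polynomial.map_prod, Polynomial.map_pow, hQ] using this
  -- root multiplicities
  set m : Fin n → ℕ := fun j => Polynomial.rootMultiplicity α (Q j) with hm
  have hmsum : (∑ j, a j * m j) = ∑ j, b j * m j := by
    have key : ∀ c : Fin n → ℕ, Multiset.count α (∏ j, Q j ^ c j).roots = ∑ j, c j * m j := by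
      intro c
      rw [Polynomial.roots_prod _ _
        (Finset.prod_ne_zero_iff.mpr fun j _ => pow_ne_zero _ (hQne j))]
      rw [Multiset.count_bind]
      simp only [Polynomial.roots_pow, Multiset.count_nsmul, Polynomial.count_roots, ← hm]
      rfl
    have := congrArg (fun p : Polynomial (AlgebraicClosure F) => Multiset.count α p.roots) hQeq
    exact (key a).symm.trans (this.trans (key b))
  -- m j = 0 for j ≠ i
  have hmz : ∀ j, j ≠ i → m j = 0 := by
    intro j hj
    apply Polynomial.rootMultiplicity_eq_zero
    intro hr
    exact hcon j hj (by rwa [Polynomial.aeval_def, ← Polynomial.eval_map])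
  have hmi : 0 < m i := by
    rw [hm]
    rw [Polynomial.rootMultiplicity_pos (hQne i)]
    rwa [Polynomial.IsRoot, Polynomial.eval_map, ← Polynomial.aeval_def]
  have hsum' : a i * m i = b i * m i := by
    have ha : (∑ j, a j * m j) = a i * m i :=
      Finset.sum_eq_single_of_mem i (Finset.mem_univ i) fun j _ hj => by rw [hmz j hj, mul_zero]
    have hb : (∑ j, b j * m j) = b i * m i :=
      Finset.sum_eq_single_of_mem i (Finset.mem_univ i) fun j _ hj => by rw [hmz j hj, mul_zero]
    rw [ha, hb] at hmsum
    exact hmsum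
  have : a i = b i := Nat.eq_of_mul_eq_mul_right hmi hsum'
  exact hknz i (by rw [hab i, this, sub_self])
end

section
/- Let f = g/h ∈ 𝔽(X) in lowest terms with deg f = d ≥ 2, iterates f^(k) = g_k/h_k in lowest terms, and let e, ε, μ be the least positive integers k such that respectively g_k(0) = 0, h_k(0) = 0, and deg g_k < deg h_k. If 0 is a pole of some iterate (ε < ∞) and 0 is a zero of some iterate (e < ∞) and μ < ∞, then ε < e. -/
open Polynomial

namespace Stmt19Aux

variable {F : Type*} [Field F]

/-- `v` is not a constant rational function. -/
def Nc (v : RatFunc F) : Prop := ∀ c : F, v ≠ algebraMap F (RatFunc F) c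

lemma rcomp_eq (u v : RatFunc F) :
    rcomp u v = Polynomial.aeval v u.num / Polynomial.aeval v u.denom := by
  simp [rcomp, RatFunc.eval, Polynomial.aeval_def]

lemma v_mul_denom (v : RatFunc F) :
    v * algebraMap F[X] (RatFunc F) v.denom = algebraMap F[X] (RatFunc F) v.num := by
  have := div_mul_cancel₀ (algebraMap F[X] (RatFunc F) v.num)
    (RatFunc.algebraMap_ne_zero v.denom_ne_zero)
  rw [RatFunc.num_div_denom] at this
  exact this

/-- homogenization identity -/
lemma aeval_mul_denom_pow (v : RatFunc F) (p : F[X]) (D : ℕ) (hD : p.natDegree < D + 1) :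
    Polynomial.aeval v p * algebraMap F[X] (RatFunc F) v.denom ^ D =
      algebraMap F[X] (RatFunc F)
        (∑ i ∈ Finset.range (D + 1), Polynomial.C (p.coeff i) * v.num ^ i * v.denom ^ (D - i)) := by
  rw [Polynomial.aeval_eq_sum_range' hD, Finset.sum_mul, map_sum]
  refine Finset.sum_congr rfl fun i hi => ?_
  have hiD : i ≤ D := Nat.lt_succ_iff.mp (Finset.mem_range.mp hi)
  rw [map_mul, map_mul, map_pow, map_pow, ← v_mul_denom v, mul_pow, Algebra.smul_def,
    RatFunc.algebraMap_eq_C, ← RatFunc.algebraMap_C,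
    show (algebraMap F[X] (RatFunc F) v.denom) ^ D
      = (algebraMap F[X] (RatFunc F) v.denom) ^ i
        * (algebraMap F[X] (RatFunc F) v.denom) ^ (D - i) from by
      rw [← pow_add]; congr 1; omega]
  ring

/-- Nonconstant rational functions are transcendental over F. -/
lemma aeval_ne_zero {v : RatFunc F} (hv : Nc v) {p : F[X]} (hp : p ≠ 0) :
    Polynomial.aeval v p ≠ 0 := by
  intro h
  by_cases hs0 : p.natDegree = 0
  · obtain ⟨c, hc⟩ := Polynomial.natDegree_eq_zero.mp hs0
    rw [← hc, Polynomial.aeval_C] at h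
    have hc0 : c = 0 := by simpa using h
    exact hp (by rw [← hc, hc0, map_zero])
  · have hkey := aeval_mul_denom_pow v p p.natDegree (Nat.lt_succ_self _)
    rw [h, zero_mul] at hkey
    have hA : (∑ i ∈ Finset.range (p.natDegree + 1),
        Polynomial.C (p.coeff i) * v.num ^ i * v.denom ^ (p.natDegree - i)) = 0 :=
      RatFunc.algebraMap_injective F (by rw [map_zero, ← hkey])
    rw [Finset.sum_range_succ, Nat.sub_self, pow_zero, mul_one] at hA
    have hdvd : v.denom ∣ Polynomial.C (p.coeff p.natDegree) * v.num ^ p.natDegree := by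
      have heq : Polynomial.C (p.coeff p.natDegree) * v.num ^ p.natDegree
          = -∑ i ∈ Finset.range p.natDegree,
              Polynomial.C (p.coeff i) * v.num ^ i * v.denom ^ (p.natDegree - i) := by
        linear_combination hA
      rw [heq]
      refine dvd_neg.mpr (Finset.dvd_sum fun i hi => ?_)
      have hilt : i < p.natDegree := Finset.mem_range.mp hi
      exact (dvd_pow_self v.denom (by omega : p.natDegree - i ≠ 0)).mul_left _
    have hcop : IsCoprime v.denom (v.num ^ p.natDegree) :=
      ((RatFunc.isCoprime_num_denom v).symm).pow_right
    have hdvdC : v.denom ∣ Polynomial.C (p.coeff p.natDegree) :=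
      hcop.dvd_of_dvd_mul_right hdvd
    have hCne : Polynomial.C (p.coeff p.natDegree) ≠ 0 :=
      Polynomial.C_ne_zero.mpr fun hc => hp (Polynomial.leadingCoeff_eq_zero.mp hc)
    have hmdeg : v.denom.natDegree = 0 := by
      have := Polynomial.natDegree_le_of_dvd hdvdC hCne
      simpa using this
    obtain ⟨m0, hm0⟩ := Polynomial.natDegree_eq_zero.mp hmdeg
    have hm0' : v.denom = Polynomial.C m0 := hm0.symm
    have hm0ne : m0 ≠ 0 := fun h0 =>
      v.denom_ne_zero (by rw [hm0', h0, map_zero])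
    have hC0 : algebraMap F[X] (RatFunc F) (Polynomial.C m0) ≠ 0 :=
      RatFunc.algebraMap_ne_zero (Polynomial.C_ne_zero.mpr hm0ne)
    have hvM := v_mul_denom v
    rw [hm0'] at hvM
    have hvw : v = algebraMap F[X] (RatFunc F) (Polynomial.C m0⁻¹ * v.num) := by
      apply mul_right_cancel₀ hC0
      rw [hvM, ← map_mul]
      congr 1
      rw [mul_comm, ← mul_assoc, ← Polynomial.C_mul, mul_inv_cancel₀ hm0ne,
        Polynomial.C_1, one_mul]
    set w : F[X] := Polynomial.C m0⁻¹ * v.num with hw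
    have hcomp : p.comp w = 0 := by
      apply RatFunc.algebraMap_injective F
      have h2 : Polynomial.aeval (algebraMap F[X] (RatFunc F) w) p
          = algebraMap F[X] (RatFunc F) (Polynomial.aeval w p) := by
        simpa using
          Polynomial.aeval_algHom_apply (IsScalarTower.toAlgHom F F[X] (RatFunc F)) w p
      rw [map_zero, Polynomial.comp_eq_aeval, ← h2, ← hvw, h]
    have hwdeg : w.natDegree = 0 := by
      have h1 : (p.comp w).natDegree = p.natDegree * w.natDegree := Polynomial.natDegree_comp
      rw [hcomp, Polynomial.natDegree_zero] at h1
      exact (Nat.mul_eq_zero.mp h1.symm).resolve_left hs0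
    obtain ⟨w0, hw0⟩ := Polynomial.natDegree_eq_zero.mp hwdeg
    exact hv w0 (by rw [hvw, ← hw0]; simp)

end Stmt19Aux

namespace Stmt19Aux

variable {F : Type*} [Field F]

/-- The field embedding `F(X) → F(X)` given by substituting `v` (nonconstant). -/
noncomputable def lift (v : RatFunc F) (hv : Nc v) : RatFunc F →ₐ[F] RatFunc F :=
  RatFunc.liftAlgHom (Polynomial.aeval v) (fun p hp => by
    rw [Submonoid.mem_comap]
    exact mem_nonZeroDivisors_of_ne_zero (aeval_ne_zero hv (nonZeroDivisors.ne_zero hp)))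

lemma rcomp_eq_lift (u v : RatFunc F) (hv : Nc v) : rcomp u v = lift v hv u := by
  rw [rcomp_eq, lift, RatFunc.liftAlgHom_apply]

lemma lift_algebraMap (v : RatFunc F) (hv : Nc v) (p : F[X]) :
    lift v hv (algebraMap F[X] (RatFunc F) p) = Polynomial.aeval v p := by
  rw [lift, RatFunc.liftAlgHom_apply, RatFunc.num_algebraMap, RatFunc.denom_algebraMap,
    map_one, div_one]

lemma Nc.rcomp' {u v : RatFunc F} (hu : Nc u) (hv : Nc v) : Nc (rcomp u v) := by
  intro c hc
  rw [rcomp_eq_lift u v hv] at hc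
  have hinj : Function.Injective (lift v hv) := RingHom.injective (lift v hv).toRingHom
  have : lift v hv u = lift v hv (algebraMap F (RatFunc F) c) := by
    rw [hc, AlgHom.commutes]
  exact hu c (hinj this)

lemma rcomp_assoc (u : RatFunc F) {w v : RatFunc F} (hw : Nc w) (hv : Nc v) :
    rcomp (rcomp u w) v = rcomp u (rcomp w v) := by
  have hwv : Nc (rcomp w v) := hw.rcomp' hv
  rw [rcomp_eq_lift _ v hv, rcomp_eq_lift u w hw, rcomp_eq_lift u _ hwv]
  have hpoly : ∀ p : F[X],
      lift v hv (lift w hw (algebraMap F[X] (RatFunc F) p))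
        = lift (rcomp w v) hwv (algebraMap F[X] (RatFunc F) p) := fun p => by
    rw [lift_algebraMap, lift_algebraMap, ← Polynomial.aeval_algHom_apply (lift v hv) w p,
      ← rcomp_eq_lift w v hv]
  conv_lhs => rw [← RatFunc.num_div_denom u]
  conv_rhs => rw [← RatFunc.num_div_denom u]
  rw [map_div₀, map_div₀, map_div₀, hpoly, hpoly]

lemma ncX : Nc (RatFunc.X : RatFunc F) := by
  intro c hc
  have h := congrArg RatFunc.num hc
  rw [RatFunc.num_X, RatFunc.algebraMap_eq_C, ← RatFunc.algebraMap_C,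
    RatFunc.num_algebraMap] at h
  exact Polynomial.X_ne_C c h

lemma Nc.riter {f : RatFunc F} (hf : Nc f) : ∀ k, Nc (riter f k)
  | 0 => ncX
  | (k + 1) => hf.rcomp' (hf.riter k)

lemma riter_add {f : RatFunc F} (hf : Nc f) (a b : ℕ) :
    riter f (a + b) = rcomp (riter f a) (riter f b) := by
  induction a with
  | zero =>
      rw [Nat.zero_add]
      show riter f b = rcomp (riter f 0) (riter f b)
      rw [show riter f 0 = RatFunc.X from rfl, rcomp, RatFunc.eval_X]
  | succ a ih =>
      have h1 : a + 1 + b = (a + b) + 1 := by omega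
      rw [h1]
      rw [show riter f (a + b + 1) = rcomp f (riter f (a + b)) from rfl,
        show riter f (a + 1) = rcomp f (riter f a) from rfl]
      rw [ih, rcomp_assoc f (hf.riter a) (hf.riter b)]

lemma not_both_eval_zero (x : RatFunc F) :
    ¬(x.num.eval 0 = 0 ∧ x.denom.eval 0 = 0) := by
  rintro ⟨h1, h2⟩
  obtain ⟨a, b, hab⟩ := RatFunc.isCoprime_num_denom x
  have h := congrArg (Polynomial.eval 0) hab
  simp [h1, h2] at h

lemma num_denom_eval_zero_iff {r : RatFunc F} {A B : F[X]} (hB : B ≠ 0)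
    (hr : r = algebraMap F[X] (RatFunc F) A / algebraMap F[X] (RatFunc F) B)
    (hAB : ¬(A.eval 0 = 0 ∧ B.eval 0 = 0)) :
    (r.num.eval 0 = 0 ↔ A.eval 0 = 0) ∧ (r.denom.eval 0 = 0 ↔ B.eval 0 = 0) := by
  have hcross : r.num * B = A * r.denom := by
    apply RatFunc.algebraMap_injective F
    have h1 : algebraMap F[X] (RatFunc F) r.num / algebraMap F[X] (RatFunc F) r.denom
        = algebraMap F[X] (RatFunc F) A / algebraMap F[X] (RatFunc F) B := by
      rw [RatFunc.num_div_denom, hr]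
    have h2 := (div_eq_div_iff (RatFunc.algebraMap_ne_zero r.denom_ne_zero)
      (RatFunc.algebraMap_ne_zero hB)).mp h1
    rw [map_mul, map_mul]
    exact h2
  have heval := congrArg (Polynomial.eval 0) hcross
  rw [Polynomial.eval_mul, Polynomial.eval_mul] at heval
  have hnd := not_both_eval_zero r
  constructor
  · constructor
    · intro h
      by_contra hA0
      have hd0 : r.denom.eval 0 ≠ 0 := fun hd => hnd ⟨h, hd⟩
      rw [h, zero_mul] at heval
      rcases mul_eq_zero.mp heval.symm with h' | h'
      exacts [hA0 h', hd0 h']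
    · intro hA0
      have hB0 : B.eval 0 ≠ 0 := fun hb => hAB ⟨hA0, hb⟩
      rw [hA0, zero_mul] at heval
      rcases mul_eq_zero.mp heval with h' | h'
      exacts [h', absurd h' hB0]
  · constructor
    · intro h
      by_contra hB0
      have hn0 : r.num.eval 0 ≠ 0 := fun hnn => hnd ⟨hnn, h⟩
      rw [h, mul_zero] at heval
      rcases mul_eq_zero.mp heval with h' | h'
      exacts [hn0 h', hB0 h']
    · intro hB0
      have hA0 : A.eval 0 ≠ 0 := fun ha => hAB ⟨ha, hB0⟩
      rw [hB0, mul_zero] at heval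
      rcases mul_eq_zero.mp heval.symm with h' | h'
      exacts [absurd h' hA0, h']

lemma eval_zero_sum (p n m : F[X]) (D : ℕ) (hn : n.eval 0 = 0) :
    (∑ i ∈ Finset.range (D + 1),
      Polynomial.C (p.coeff i) * n ^ i * m ^ (D - i)).eval 0
      = p.eval 0 * m.eval 0 ^ D := by
  rw [Polynomial.eval_finset_sum, Finset.sum_eq_single 0]
  · simp [Polynomial.coeff_zero_eq_eval_zero]
  · intro i hi hne
    simp [hn, zero_pow hne]
  · intro h
    exact absurd (Finset.mem_range.mpr (Nat.succ_pos D)) h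

lemma transfer (u v : RatFunc F) (hv : Nc v)
    (hn : v.num.eval 0 = 0) (hm : v.denom.eval 0 ≠ 0) :
    ((rcomp u v).num.eval 0 = 0 ↔ u.num.eval 0 = 0) ∧
      ((rcomp u v).denom.eval 0 = 0 ↔ u.denom.eval 0 = 0) := by
  set D := max u.num.natDegree u.denom.natDegree with hD
  set A := ∑ i ∈ Finset.range (D + 1),
    Polynomial.C (u.num.coeff i) * v.num ^ i * v.denom ^ (D - i) with hA
  set B := ∑ i ∈ Finset.range (D + 1),
    Polynomial.C (u.denom.coeff i) * v.num ^ i * v.denom ^ (D - i) with hB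
  have hAid := aeval_mul_denom_pow v u.num D
    (Nat.lt_succ_of_le (le_max_left _ _))
  have hBid := aeval_mul_denom_pow v u.denom D
    (Nat.lt_succ_of_le (le_max_right _ _))
  rw [← hA] at hAid
  rw [← hB] at hBid
  have hMne : algebraMap F[X] (RatFunc F) v.denom ^ D ≠ 0 :=
    pow_ne_zero _ (RatFunc.algebraMap_ne_zero v.denom_ne_zero)
  have hdenomne : Polynomial.aeval v u.denom ≠ 0 := aeval_ne_zero hv u.denom_ne_zero
  have hBne : B ≠ 0 := by
    intro h0
    apply hdenomne
    have h1 : Polynomial.aeval v u.denom * algebraMap F[X] (RatFunc F) v.denom ^ D = 0 := by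
      rw [hBid, h0, map_zero]
    exact (mul_eq_zero.mp h1).resolve_right hMne
  have hpow : v.denom.eval 0 ^ D ≠ 0 := pow_ne_zero _ hm
  have hAeval : A.eval 0 = u.num.eval 0 * v.denom.eval 0 ^ D := eval_zero_sum _ _ _ _ hn
  have hBeval : B.eval 0 = u.denom.eval 0 * v.denom.eval 0 ^ D := eval_zero_sum _ _ _ _ hn
  have hA0 : A.eval 0 = 0 ↔ u.num.eval 0 = 0 := by
    rw [hAeval]
    exact ⟨fun h => (mul_eq_zero.mp h).resolve_right hpow, fun h => by rw [h, zero_mul]⟩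
  have hB0 : B.eval 0 = 0 ↔ u.denom.eval 0 = 0 := by
    rw [hBeval]
    exact ⟨fun h => (mul_eq_zero.mp h).resolve_right hpow, fun h => by rw [h, zero_mul]⟩
  have hr : rcomp u v = algebraMap F[X] (RatFunc F) A / algebraMap F[X] (RatFunc F) B := by
    rw [rcomp_eq, div_eq_div_iff hdenomne (RatFunc.algebraMap_ne_zero hBne)]
    rw [← hAid, ← hBid]
    ring
  have hAB : ¬(A.eval 0 = 0 ∧ B.eval 0 = 0) := by
    rintro ⟨x, y⟩
    exact not_both_eval_zero u ⟨hA0.mp x, hB0.mp y⟩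
  obtain ⟨h1, h2⟩ := num_denom_eval_zero_iff hBne hr hAB
  exact ⟨h1.trans hA0, h2.trans hB0⟩

end Stmt19Aux

theorem stmt19 {F : Type*} [Field F] (f : RatFunc F) (d : ℕ) (hd : rdeg f = d) (hd2 : 2 ≤ d)
    (e ε μ : ℕ)
    (he0 : 0 < e) (he : ((riter f e).num).eval 0 = 0)
    (hemin : ∀ k, 0 < k → k < e → ((riter f k).num).eval 0 ≠ 0)
    (hε0 : 0 < ε) (hε : ((riter f ε).denom).eval 0 = 0)
    (hεmin : ∀ k, 0 < k → k < ε → ((riter f k).denom).eval 0 ≠ 0)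
    (hμ0 : 0 < μ) (hμ : (riter f μ).num.natDegree < (riter f μ).denom.natDegree)
    (hμmin : ∀ k, 0 < k → k < μ → ¬ (riter f k).num.natDegree < (riter f k).denom.natDegree) :
    ε < e := by
  classical
  have hfnc : Stmt19Aux.Nc f := by
    intro c hc
    rw [hc, rdeg, RatFunc.algebraMap_eq_C, ← RatFunc.algebraMap_C,
      RatFunc.num_algebraMap, RatFunc.denom_algebraMap] at hd
    simp at hd
    omega
  by_contra hcon
  push_neg at hcon
  have hne : e ≠ ε := by
    intro h
    exact Stmt19Aux.not_both_eval_zero (riter f e) ⟨he, h ▸ hε⟩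
  have hlt : e < ε := lt_of_le_of_ne hcon hne
  set r := ε - e with hr
  have hr0 : 0 < r := by omega
  have hrε : r < ε := by omega
  have hsum : r + e = ε := by omega
  have hm : (riter f e).denom.eval 0 ≠ 0 := hεmin e he0 hlt
  have hdec : riter f ε = rcomp (riter f r) (riter f e) := by
    rw [← hsum, Stmt19Aux.riter_add hfnc r e]
  obtain ⟨-, hden⟩ := Stmt19Aux.transfer (riter f r) (riter f e)
    (hfnc.riter e) he hm
  rw [hdec] at hε
  exact hεmin r hr0 hrε (hden.mp hε)
end
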